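/- arXiv:1907.04109 — 9 statements merged into one kernel-verified Lean document; each statement's English description precedes it below -/
import Mathlib

section
/- Let n ≥ 1 be a natural number and p ∈ ℂ with pⁿ = −n. Let f ∈ X + X²ℂ[[X]] satisfy p·f = f'·(f∘(pX)) and suppose coeff_k f = 0 for every k ≥ 2 with k ≢ 1 (mod n). Set A_k := coeff_{kn+1} f (so A₀ = 1). Then for every k ≥ 1: (k − (−n)^{k−1})·A_k = Σ_{m=1}^{k−1} (n·m + 1)·(−n)^{k−m−1}·A_m·A_{k−m}, where −n denotes the complex number −n. -/
open PowerSeries Finset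

/-!
Comparing the coefficients of `X^(kn+1)` on both sides of `p·f = f'·(f∘(pX))`, only the products
`coeff (mn) f' · coeff ((k-m)n+1) (f∘(pX))` survive, since the support of `f` lies in `nℕ + 1`.
The factor `p^((k-m)n+1)` coming from the rescaling equals `(-n)^(k-m)·p`, so after cancelling `p`
one gets `A_k = Σ_{m=0}^{k} (nm+1)(-n)^(k-m) A_m A_(k-m)`. The terms `m = 0` and `m = k` contain
`A_k` itself; moving them to the left and dividing by `-n` gives the recurrence.
-/

lemma exists_eq_mul_add_one_of_coeff_ne_zero {R : Type*} [Semiring R] {n : ℕ} {f : R⟦X⟧}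
    (h0 : coeff 0 f = 0) (hvan : ∀ k, 2 ≤ k → ¬ (k ≡ 1 [MOD n]) → coeff k f = 0)
    {j : ℕ} (hj : coeff j f ≠ 0) : ∃ m, j = m * n + 1 := by
  obtain rfl | rfl | hj2 : j = 0 ∨ j = 1 ∨ 2 ≤ j := by omega
  · exact absurd h0 hj
  · exact ⟨0, by simp⟩
  · have hmod : j ≡ 1 [MOD n] := by_contra fun h => hj (hvan j hj2 h)
    obtain ⟨m, hm⟩ := (Nat.modEq_iff_dvd' (by omega)).mp hmod.symm
    exact ⟨m, by rw [mul_comm]; omega⟩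

lemma coeff_mul_mul_add_one {R : Type*} [CommSemiring R] {n : ℕ} (hn : n ≠ 0) {u v : R⟦X⟧}
    (hu : ∀ i, coeff i u ≠ 0 → ∃ m, i = m * n) (hv : ∀ j, coeff j v ≠ 0 → ∃ m, j = m * n + 1)
    (k : ℕ) :
    coeff (k * n + 1) (u * v) =
      ∑ m ∈ range (k + 1), coeff (m * n) u * coeff ((k - m) * n + 1) v := by
  rw [coeff_mul]
  refine (sum_of_injOn (fun m => (m * n, (k - m) * n + 1)) ?_ ?_ ?_ fun _ _ => rfl).symm
  · intro a _ b _ hab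
    exact Nat.eq_of_mul_eq_mul_right (Nat.pos_of_ne_zero hn) (congrArg Prod.fst hab)
  · intro m hm
    have hle : m * n ≤ k * n := Nat.mul_le_mul_right n (by simpa [Nat.lt_succ_iff] using hm)
    rw [mem_coe, HasAntidiagonal.mem_antidiagonal]
    dsimp only
    rw [Nat.sub_mul]
    omega
  · rintro ⟨i, j⟩ hij hnot
    by_contra hne
    obtain ⟨m, rfl⟩ := hu i (left_ne_zero_of_mul hne)
    obtain ⟨m', rfl⟩ := hv j (right_ne_zero_of_mul hne)
    have hk : (m + m') * n = k * n := by rw [HasAntidiagonal.mem_antidiagonal] at hij; linarith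
    obtain rfl := Nat.eq_of_mul_eq_mul_right (Nat.pos_of_ne_zero hn) hk
    exact hnot ⟨m, by simp, by simp⟩

lemma coeff_mul_add_one_eq_sum_of_eigen {K : Type*} [Field K] {n : ℕ} (hn : n ≠ 0) {p : K}
    (hp0 : p ≠ 0) (hp : p ^ n = -(n : K)) {f : K⟦X⟧} (heq : C p * f = d⁄dX K f * rescale p f)
    (hsupp : ∀ j, coeff j f ≠ 0 → ∃ m, j = m * n + 1) (k : ℕ) :
    coeff (k * n + 1) f = ∑ m ∈ range (k + 1),
      ((n : K) * m + 1) * (-(n : K)) ^ (k - m) * coeff (m * n + 1) f * coeff ((k - m) * n + 1) f := by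
  have hderiv : ∀ i, coeff i (d⁄dX K f) ≠ 0 → ∃ m, i = m * n := fun i hi => by
    obtain ⟨m, hm⟩ := hsupp (i + 1) (left_ne_zero_of_mul (by rwa [← coeff_derivative]))
    exact ⟨m, by omega⟩
  have hrescale : ∀ j, coeff j (rescale p f) ≠ 0 → ∃ m, j = m * n + 1 := fun j hj =>
    hsupp j (right_ne_zero_of_mul (by rwa [← coeff_rescale]))
  have hc := congrArg (coeff (k * n + 1)) heq
  rw [coeff_C_mul, coeff_mul_mul_add_one hn hderiv hrescale] at hc
  refine mul_left_cancel₀ hp0 (hc.trans ?_)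
  rw [mul_sum]
  refine sum_congr rfl fun m _ => ?_
  rw [coeff_derivative, coeff_rescale, pow_succ, pow_mul', hp]
  push_cast
  ring

lemma sub_pow_mul_eq_sum_Ico {K : Type*} [Field K] {N : K} (hN : N ≠ 0) {a : ℕ → K}
    (ha0 : a 0 = 1) {k : ℕ} (hk : 1 ≤ k)
    (h : a k = ∑ m ∈ range (k + 1), (N * m + 1) * (-N) ^ (k - m) * a m * a (k - m)) :
    ((k : K) - (-N) ^ (k - 1)) * a k =
      ∑ m ∈ Ico 1 k, (N * m + 1) * (-N) ^ (k - m - 1) * a m * a (k - m) := by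
  rw [range_eq_Ico, sum_eq_sum_Ico_succ_bot (by omega), sum_Ico_succ_top hk] at h
  simp only [Nat.cast_zero, mul_zero, zero_add, Nat.sub_zero, Nat.sub_self, pow_zero, ha0,
    one_mul, mul_one] at h
  have hpow : ∀ j, 1 ≤ j → (-N) ^ j = -N * (-N) ^ (j - 1) := fun j hj => by
    rw [← pow_succ']; congr 1; omega
  have hsum : ∑ m ∈ Ico 1 k, (N * m + 1) * (-N) ^ (k - m) * a m * a (k - m) =
      -N * ∑ m ∈ Ico 1 k, (N * m + 1) * (-N) ^ (k - m - 1) * a m * a (k - m) := by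
    rw [mul_sum]
    refine sum_congr rfl fun m hm => ?_
    rw [hpow (k - m) (by simp at hm; omega), Nat.sub_sub]
    ring
  rw [hsum, hpow k hk] at h
  refine mul_left_cancel₀ (neg_ne_zero.mpr hN) ?_
  linear_combination h

/-- **Proposition 1.3.** Let `n ≥ 1`, `pⁿ = -n`, and let `f ∈ X + X²ℂ[[X]]` satisfy
`p·f = f'·(f∘(pX))` with `coeff_k f = 0` for all `k ≥ 2`, `k ≢ 1 (mod n)`.
Writing `A_k := coeff_{kn+1} f`, for every `k ≥ 1` one has
`(k − (−n)^{k−1})·A_k = Σ_{m=1}^{k−1} (n·m + 1)·(−n)^{k−m−1}·A_m·A_{k−m}`. -/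
theorem statement2 (n : ℕ) (hn : 1 ≤ n) (p : ℂ) (hp : p ^ n = -(n : ℂ))
    (f : PowerSeries ℂ)
    (h0 : coeff 0 f = 0) (h1 : coeff 1 f = 1)
    (heq : C p * f = (d⁄dX ℂ f) * rescale p f)
    (hvan : ∀ k, 2 ≤ k → ¬ (k ≡ 1 [MOD n]) → coeff k f = 0) :
    ∀ k : ℕ, 1 ≤ k →
      ((k : ℂ) - (-(n : ℂ)) ^ (k - 1)) * coeff (k * n + 1) f =
        ∑ m ∈ Ico 1 k, ((n : ℂ) * (m : ℂ) + 1) * (-(n : ℂ)) ^ (k - m - 1) *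
          coeff (m * n + 1) f * coeff ((k - m) * n + 1) f := by
  intro k hk
  have hn0 : n ≠ 0 := by omega
  have hnC : (n : ℂ) ≠ 0 := Nat.cast_ne_zero.mpr hn0
  have hp0 : p ≠ 0 := by
    rintro rfl
    exact hnC (neg_eq_zero.mp (hp.symm.trans (zero_pow hn0)))
  have hsupp : ∀ j, coeff j f ≠ 0 → ∃ m, j = m * n + 1 := fun _ =>
    exists_eq_mul_add_one_of_coeff_ne_zero h0 hvan
  exact sub_pow_mul_eq_sum_Ico (a := fun m => coeff (m * n + 1) f) hnC (by simpa using h1) hk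
    (coeff_mul_add_one_eq_sum_of_eigen hn0 hp0 hp heq hsupp k)
end

section
/- Let n ≥ 1 be a natural number and p ∈ ℂ with pⁿ = −n. Let f ∈ X + X²ℂ[[X]] satisfy p·f = f'·(f∘(pX)) and suppose coeff_k f = 0 for every k ≥ 2 with k ≢ 1 (mod n). Let B ∈ ℂ[[X]] be the unique power series with f·B = X (it exists since f/X is a unit), so B represents X/f. Then coeff_j B = 0 whenever n does not divide j; and setting B_k := coeff_{nk} B, one has B₀ = 1, B₁ = −coeff_{n+1} f, and for every k ≥ 1: (k − (−n)^{k−1})·B_k = Σ_{m=1}^{k−1} (−n)^{m−1}·B_m·B_{k−m}. -/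
/-!
Write `ζ` for a primitive `n`-th root of unity. The vanishing hypothesis says `f(ζX) = ζ f`, so
`f(ζX) B(ζX) = ζX = ζ f B` forces `B(ζX) = B`, i.e. `B` is a series in `X^n`.
Substituting `pX` into `f B = X` and using the eigen-equation gives `B(pX) = f' B`; together with
`f B' + f' B = 1` (the derivative of `f B = X`) this yields the Riccati-type identity
`B(pX) B = B - X B'`. Its coefficient of `X^(nk)`, where only multiples of `n` contribute and
`p^(nm) = (-n)^m`, is the recurrence.
-/

open PowerSeries Finset

theorem Finset.Nat.sum_antidiagonal_mul_left_of_dvd {M : Type*} [AddCommMonoid M] {n : ℕ}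
    (hn : n ≠ 0) (F : ℕ → ℕ → M) (hF : ∀ i j, ¬ n ∣ i → F i j = 0) (k : ℕ) :
    ∑ x ∈ antidiagonal (n * k), F x.1 x.2 = ∑ x ∈ antidiagonal k, F (n * x.1) (n * x.2) := by
  set e : ℕ × ℕ → ℕ × ℕ := Prod.map (n * ·) (n * ·)
  have he : Set.InjOn e (antidiagonal k) := fun x _ y _ h =>
    Prod.ext (Nat.eq_of_mul_eq_mul_left (by omega) (congrArg Prod.fst h))
      (Nat.eq_of_mul_eq_mul_left (by omega) (congrArg Prod.snd h))
  have hsub : (antidiagonal k).image e ⊆ antidiagonal (n * k) := by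
    intro x hx
    obtain ⟨y, hy, rfl⟩ := mem_image.mp hx
    rw [HasAntidiagonal.mem_antidiagonal] at hy ⊢
    simp [e, ← hy, mul_add]
  have hzero : ∀ x ∈ antidiagonal (n * k), x ∉ (antidiagonal k).image e → F x.1 x.2 = 0 := by
    rintro ⟨i, j⟩ hij hnot
    refine hF i j fun ⟨a, ha⟩ => hnot (mem_image.mpr ⟨(a, k - a), ?_, ?_⟩)
    all_goals
      rw [HasAntidiagonal.mem_antidiagonal] at hij
      subst ha
      have hak : a ≤ k := Nat.le_of_mul_le_mul_left (by omega : n * a ≤ n * k) (by omega)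
    · rw [HasAntidiagonal.mem_antidiagonal]; omega
    · have : n * (k - a) = j := by rw [Nat.mul_sub]; omega
      simp [e, this]
  rw [← sum_subset hsub hzero, sum_image he]
  rfl

theorem sub_pow_mul_eq_sum_Ico_of_sum_antidiagonal {R : Type*} [CommRing R] [IsDomain R]
    {c : R} (hc : c ≠ 0) {b : ℕ → R} (hb0 : b 0 = 1) {k : ℕ} (hk : 1 ≤ k)
    (h : ∑ x ∈ antidiagonal k, c ^ x.1 * b x.1 * b x.2 = (1 + c * k) * b k) :
    ((k : R) - c ^ (k - 1)) * b k = ∑ m ∈ Ico 1 k, c ^ (m - 1) * b m * b (k - m) := by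
  rw [Finset.Nat.sum_antidiagonal_eq_sum_range_succ (fun i j => c ^ i * b i * b j), range_eq_Ico,
    sum_eq_sum_Ico_succ_bot (by omega), sum_Ico_succ_top hk] at h
  simp only [pow_zero, hb0, Nat.sub_zero, Nat.sub_self, one_mul, mul_one] at h
  have hsum : ∑ m ∈ Ico 1 k, c ^ m * b m * b (k - m) =
      c * ∑ m ∈ Ico 1 k, c ^ (m - 1) * b m * b (k - m) := by
    rw [mul_sum]
    refine sum_congr rfl fun m hm => ?_
    rw [← mul_pow_sub_one (by simp at hm; omega) c]
    ring
  rw [hsum, ← mul_pow_sub_one (by omega : k ≠ 0) c] at h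
  apply mul_left_cancel₀ hc
  linear_combination (-1 : R) * h

namespace PowerSeries

variable {R : Type*} [CommRing R]

theorem coeff_X_mul_derivative (f : R⟦X⟧) (m : ℕ) :
    coeff m (X * d⁄dX R f) = m * coeff m f := by
  cases m with
  | zero => simp
  | succ m => rw [coeff_succ_X_mul, coeff_derivative, mul_comm]; push_cast; rfl

theorem rescale_eq_C_mul_of_coeff_eq_zero {n : ℕ} {ζ : R} (hζ : ζ ^ n = 1) {f : R⟦X⟧}
    (hf : ∀ k, ¬ k ≡ 1 [MOD n] → coeff k f = 0) : rescale ζ f = C ζ * f := by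
  ext k
  rw [coeff_rescale, coeff_C_mul]
  by_cases hk : k ≡ 1 [MOD n]
  · rw [pow_eq_pow_of_modEq hk hζ, pow_one]
  · simp [hf k hk]

theorem coeff_zero_eq_one_of_mul_eq_X {f B : R⟦X⟧} (h0 : coeff 0 f = 0) (h1 : coeff 1 f = 1)
    (hB : f * B = X) : coeff 0 B = 1 := by
  simpa [coeff_mul, Finset.Nat.antidiagonal_succ, h0, h1] using congrArg (coeff 1) hB

variable [IsDomain R]

theorem coeff_eq_zero_of_rescale_eq_self {n : ℕ} {ζ : R} (hζ : IsPrimitiveRoot ζ n)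
    {g : R⟦X⟧} (hg : rescale ζ g = g) {j : ℕ} (hj : ¬ n ∣ j) : coeff j g = 0 := by
  have h : (ζ ^ j - 1) * coeff j g = 0 := by
    rw [sub_mul, one_mul, ← coeff_rescale, hg, sub_self]
  exact (mul_eq_zero.mp h).resolve_left (sub_ne_zero.mpr ((hζ.pow_eq_one_iff_dvd j).not.mpr hj))

theorem rescale_eq_self_of_mul_eq_X {ζ : R} (hζ : ζ ≠ 0) {f B : R⟦X⟧}
    (hf : rescale ζ f = C ζ * f) (hB : f * B = X) : rescale ζ B = B := by
  have hf0 : f ≠ 0 := by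
    rintro rfl
    exact X_ne_zero (R := R) (by simpa using hB.symm)
  have hCf : C ζ * f ≠ 0 := mul_ne_zero ((map_ne_zero_iff _ C_injective).mpr hζ) hf0
  apply mul_left_cancel₀ hCf
  rw [← hf, ← map_mul, hB, rescale_X, hf, mul_assoc, hB]

theorem coeff_eq_zero_of_mul_eq_X {n : ℕ} {ζ : R} (hζ : IsPrimitiveRoot ζ n) (hn : n ≠ 0)
    {f B : R⟦X⟧} (hf : ∀ k, ¬ k ≡ 1 [MOD n] → coeff k f = 0) (hB : f * B = X) {j : ℕ}
    (hj : ¬ n ∣ j) : coeff j B = 0 :=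
  coeff_eq_zero_of_rescale_eq_self hζ
    (rescale_eq_self_of_mul_eq_X (hζ.ne_zero hn)
      (rescale_eq_C_mul_of_coeff_eq_zero hζ.pow_eq_one hf) hB) hj

theorem coeff_eq_neg_coeff_succ_of_mul_eq_X {n : ℕ} (hn : n ≠ 0) {f B : R⟦X⟧}
    (h0 : coeff 0 f = 0) (h1 : coeff 1 f = 1) (hB : f * B = X)
    (hvanB : ∀ j, ¬ n ∣ j → coeff j B = 0) : coeff n B = -coeff (n + 1) f := by
  have h := congrArg (coeff (n + 1)) hB
  rw [coeff_mul, coeff_X, if_neg (by omega), sum_eq_add (1, n) (n + 1, 0) (by simp [hn]) ?_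
    (by simp [add_comm]) (by simp)] at h
  · rw [h1, coeff_zero_eq_one_of_mul_eq_X h0 h1 hB] at h
    linear_combination h
  · rintro ⟨i, j⟩ hij ⟨hne, hne'⟩
    rw [HasAntidiagonal.mem_antidiagonal] at hij
    rcases Nat.eq_zero_or_pos i with rfl | hi
    · rw [h0, zero_mul]
    · have hj : ¬ n ∣ j := Nat.not_dvd_of_pos_of_lt (by grind) (by grind)
      rw [hvanB j hj, mul_zero]

theorem rescale_mul_eq_sub_X_mul_derivative {p : R} (hp : p ≠ 0) {f B : R⟦X⟧}
    (heq : C p * f = d⁄dX R f * rescale p f) (hB : f * B = X) :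
    rescale p B * B = B - X * d⁄dX R B := by
  have hCX : C p * X ≠ 0 := mul_ne_zero ((map_ne_zero_iff _ C_injective).mpr hp) X_ne_zero
  have hBp : rescale p f * rescale p B = C p * X := by rw [← map_mul, hB, rescale_X]
  have hresc : rescale p B = d⁄dX R f * B := mul_left_cancel₀ hCX <| by
    linear_combination (-(C p) * rescale p B) * hB + (B * rescale p B) * heq +
      (d⁄dX R f * B) * hBp
  have hder : f * d⁄dX R B + B * d⁄dX R f = 1 := by
    simpa [mul_comm] using congrArg (d⁄dX R) hB
  rw [hresc]
  linear_combination B * hder - d⁄dX R B * hB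

end PowerSeries

theorem statement3_general (n : ℕ) (p : ℂ) (hp : p ^ n = -(n : ℂ))
    (f : PowerSeries ℂ)
    (h0 : coeff 0 f = 0) (h1 : coeff 1 f = 1)
    (heq : C p * f = (d⁄dX ℂ f) * rescale p f)
    (hvan : ∀ k, 2 ≤ k → ¬ (k ≡ 1 [MOD n]) → coeff k f = 0)
    (B : PowerSeries ℂ) (hB : f * B = X) :
    (∀ j : ℕ, ¬ (n ∣ j) → coeff j B = 0) ∧
    coeff 0 B = 1 ∧
    coeff n B = -coeff (n + 1) f ∧
    ∀ k : ℕ, 1 ≤ k →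
      ((k : ℂ) - (-(n : ℂ)) ^ (k - 1)) * coeff (n * k) B =
        ∑ m ∈ Ico 1 k, (-(n : ℂ)) ^ (m - 1) * coeff (n * m) B * coeff (n * (k - m)) B := by
  have hn0 : n ≠ 0 := by
    rintro rfl
    norm_num at hp
  have hp0 : p ≠ 0 := by
    rintro rfl
    simp [zero_pow hn0, hn0] at hp
  have hf : ∀ k, ¬ k ≡ 1 [MOD n] → coeff k f = 0 := by
    intro k hk
    rcases Nat.lt_or_ge k 2 with hk2 | hk2
    · interval_cases k
      exacts [h0, absurd rfl hk]
    · exact hvan k hk2 hk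
  have hvanB : ∀ j, ¬ n ∣ j → coeff j B = 0 := fun j =>
    coeff_eq_zero_of_mul_eq_X (Complex.isPrimitiveRoot_exp n hn0) hn0 hf hB
  have hB0 := coeff_zero_eq_one_of_mul_eq_X h0 h1 hB
  refine ⟨hvanB, hB0, coeff_eq_neg_coeff_succ_of_mul_eq_X hn0 h0 h1 hB hvanB, fun k hk => ?_⟩
  refine sub_pow_mul_eq_sum_Ico_of_sum_antidiagonal (b := fun m => coeff (n * m) B)
    (by simpa using hn0) (by simpa using hB0) hk ?_
  have h := congrArg (coeff (n * k)) (rescale_mul_eq_sub_X_mul_derivative hp0 heq hB)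
  simp only [coeff_mul, coeff_rescale] at h
  rw [Finset.Nat.sum_antidiagonal_mul_left_of_dvd hn0 (fun i j => p ^ i * coeff i B * coeff j B)
    (fun i j hi => by simp [hvanB i hi]) k] at h
  simp only [pow_mul, hp, map_sub, coeff_X_mul_derivative] at h
  push_cast at h
  linear_combination h

/-- **Proposition 1.4.** Let `n ≥ 1`, `pⁿ = -n`, let `f ∈ X + X²ℂ[[X]]` satisfy
`p·f = f'·(f∘(pX))` with `coeff_k f = 0` for `k ≥ 2`, `k ≢ 1 (mod n)`,
and let `B ∈ ℂ[[X]]` be the series with `f·B = X` (so `B = X/f`).  Then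
`coeff_j B = 0` whenever `n ∤ j`, and writing `B_k := coeff_{nk} B` one has
`B₀ = 1`, `B₁ = -coeff_{n+1} f`, and for every `k ≥ 1`
`(k − (−n)^{k−1})·B_k = Σ_{m=1}^{k−1} (−n)^{m−1}·B_m·B_{k−m}`. -/
theorem statement3 (n : ℕ) (hn : 1 ≤ n) (p : ℂ) (hp : p ^ n = -(n : ℂ))
    (f : PowerSeries ℂ)
    (h0 : coeff 0 f = 0) (h1 : coeff 1 f = 1)
    (heq : C p * f = (d⁄dX ℂ f) * rescale p f)
    (hvan : ∀ k, 2 ≤ k → ¬ (k ≡ 1 [MOD n]) → coeff k f = 0)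
    (B : PowerSeries ℂ) (hB : f * B = X) :
    (∀ j : ℕ, ¬ (n ∣ j) → coeff j B = 0) ∧
    coeff 0 B = 1 ∧
    coeff n B = -coeff (n + 1) f ∧
    ∀ k : ℕ, 1 ≤ k →
      ((k : ℂ) - (-(n : ℂ)) ^ (k - 1)) * coeff (n * k) B =
        ∑ m ∈ Ico 1 k, (-(n : ℂ)) ^ (m - 1) * coeff (n * m) B * coeff (n * (k - m)) B :=
  statement3_general n p hp f h0 h1 heq hvan B hB
end

section
/- Let f ∈ X + X²ℂ[[X]] and let g := 𝔗f, i.e. g ∈ X + X²ℂ[[X]] with g·f' = f. Let φ ∈ X + X²ℂ[[X]] be the compositional inverse of f (f∘φ = X). Let u ∈ ℂ[[X]] satisfy coeff_0 u = 0 and X·u' = φ (so u = ∫₀^x φ(t)/t dt), and let v ∈ ℂ[[X]] satisfy coeff_0 v = 0 and g·v' = X (so v = ∫₀^x t/g(t) dt). Let w ∈ X + X²ℂ[[X]] be the compositional inverse of u (u∘w = X). Then 𝔗w = w/w' is the compositional inverse of v, i.e. v∘(w/w') = X. (In the paper's notation: the operator Q𝔗Q, where Q denotes compositional inversion, sends ∫₀^x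 f^{inv}(t)/t dt to ∫₀^x t/(𝔗f)(t) dt.) -/
/-!
Composing `g · v' = X` with `φ` and using `g ∘ φ = X · φ'` (the chain rule applied to
`f ∘ φ = X`) shows that `v ∘ φ` and `u` have the same derivative `φ / X` and both vanish
at `0`, so `v ∘ φ = u`. Differentiating `u ∘ w = X` gives `(φ ∘ w) · w' = w`, so
`𝔗w = φ ∘ w`. Hence `v ∘ 𝔗w = (v ∘ φ) ∘ w = u ∘ w = X`.

On series without constant term `pcomp` agrees with Mathlib's `PowerSeries.subst`, whose
multiplicativity, chain rule and associativity carry the argument.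
-/

open PowerSeries Finset

/-- Composition `f ∘ g` of formal power series (intended for `g` with zero constant
term, in which case `coeff_n (f ∘ g) = Σ_{k=0}^{n} coeff_k f · coeff_n (gᵏ)`). -/
noncomputable def pcomp (f g : PowerSeries ℂ) : PowerSeries ℂ :=
  PowerSeries.mk fun n => ∑ k ∈ range (n + 1), coeff k f * coeff n (g ^ k)

namespace PowerSeries

variable {R : Type*} [CommRing R]

theorem coeff_subst_eq_sum_range {c : R⟦X⟧} (hc : constantCoeff c = 0) (f : R⟦X⟧) (n : ℕ) :
    coeff n (f.subst c) = ∑ k ∈ range (n + 1), coeff k f * coeff n (c ^ k) := by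
  rw [coeff_subst' (HasSubst.of_constantCoeff_zero' hc)]
  refine finsum_eq_sum_of_support_subset _ fun k hk => ?_
  by_contra hkn
  have hlt : (n : ℕ∞) < (c ^ k).order :=
    lt_of_lt_of_le (by exact_mod_cast (by simpa using hkn : n < k))
      (le_order_pow_of_constantCoeff_eq_zero k hc)
  exact hk (by simp only [coeff_of_lt_order n hlt, smul_zero])

theorem constantCoeff_subst_of_constantCoeff_eq_zero {c : R⟦X⟧} (hc : constantCoeff c = 0)
    (f : R⟦X⟧) : constantCoeff (f.subst c) = constantCoeff f := by
  simpa using coeff_subst_eq_sum_range hc f 0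

theorem subst_derivative_mul_derivative_of_subst_eq_X {a b : R⟦X⟧} (hb : HasSubst b)
    (hab : a.subst b = X) : (d⁄dX R a).subst b * d⁄dX R b = 1 := by
  rw [← derivative_subst hb, hab, derivative_X]

theorem subst_eq_X_mul_derivative {f g φ : R⟦X⟧} (hφ : HasSubst φ) (hg : g * d⁄dX R f = f)
    (hfφ : f.subst φ = X) : g.subst φ = X * d⁄dX R φ := by
  calc g.subst φ = g.subst φ * ((d⁄dX R f).subst φ * d⁄dX R φ) := by
        rw [subst_derivative_mul_derivative_of_subst_eq_X hφ hfφ, mul_one]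
    _ = (g * d⁄dX R f).subst φ * d⁄dX R φ := by rw [subst_mul hφ, mul_assoc]
    _ = X * d⁄dX R φ := by rw [hg, hfφ]

theorem eq_subst_of_mul_derivative_eq_self {u w φ T : R⟦X⟧} (hw : HasSubst w)
    (huw : u.subst w = X) (hu : X * d⁄dX R u = φ) (hT : T * d⁄dX R w = w) :
    T = φ.subst w := by
  have hchain := subst_derivative_mul_derivative_of_subst_eq_X hw huw
  have hunit : IsUnit (d⁄dX R w) := IsUnit.of_mul_eq_one_right _ hchain
  refine hunit.mul_left_inj.1 ?_
  rw [hT, ← hu, subst_mul hw, subst_X hw, mul_assoc, hchain, mul_one]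

theorem subst_eq_of_mul_derivative_eq_X [IsAddTorsionFree R] {g u v φ : R⟦X⟧}
    (hφ0 : constantCoeff φ = 0) (hgφ : g.subst φ = X * d⁄dX R φ) (hv : g * d⁄dX R v = X)
    (hu : X * d⁄dX R u = φ) (h0 : constantCoeff v = constantCoeff u) :
    v.subst φ = u := by
  have hφ := HasSubst.of_constantCoeff_zero' hφ0
  refine derivative.ext (X_mul_cancel ?_) ?_
  · calc X * d⁄dX R (v.subst φ) = g.subst φ * (d⁄dX R v).subst φ := by
          rw [derivative_subst hφ, hgφ]; ring
      _ = X * d⁄dX R u := by rw [← subst_mul hφ, hv, subst_X hφ, hu]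
  · rw [constantCoeff_subst_of_constantCoeff_eq_zero hφ0, h0]

end PowerSeries

theorem pcomp_eq_subst {c : PowerSeries ℂ} (hc : constantCoeff c = 0) (f : PowerSeries ℂ) :
    pcomp f c = f.subst c := by
  ext n
  rw [coeff_subst_eq_sum_range hc, pcomp, coeff_mk]

theorem statement4_general (f g φ u v w Tw : PowerSeries ℂ)
    (hg : g * d⁄dX ℂ f = f)
    (hφ0 : coeff 0 φ = 0)
    (hφ : pcomp f φ = X)
    (hu0 : coeff 0 u = 0) (hu : X * d⁄dX ℂ u = φ)
    (hv0 : coeff 0 v = 0) (hv : g * d⁄dX ℂ v = X)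
    (hw0 : coeff 0 w = 0)
    (hw : pcomp u w = X)
    (hTw : Tw * d⁄dX ℂ w = w) :
    pcomp v Tw = X := by
  rw [coeff_zero_eq_constantCoeff_apply] at hφ0 hu0 hv0 hw0
  rw [pcomp_eq_subst hφ0] at hφ
  rw [pcomp_eq_subst hw0] at hw
  have hφs := HasSubst.of_constantCoeff_zero' hφ0
  have hws := HasSubst.of_constantCoeff_zero' hw0
  have hTw_eq : Tw = φ.subst w := eq_subst_of_mul_derivative_eq_self hws hw hu hTw
  have hvφ : v.subst φ = u :=
    subst_eq_of_mul_derivative_eq_X hφ0 (subst_eq_X_mul_derivative hφs hg hφ) hv hu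
      (by rw [hv0, hu0])
  have hTw0 : constantCoeff Tw = 0 := by
    rw [hTw_eq, constantCoeff_subst_of_constantCoeff_eq_zero hw0, hφ0]
  rw [pcomp_eq_subst hTw0, hTw_eq, ← subst_comp_subst_apply hφs hws, hvφ, hw]

/-- **Observation 1.1.** Let `f ∈ X + X²ℂ[[X]]`, `g = 𝔗f` (so `g·f' = f`), let `φ`
be the compositional inverse of `f`, let `u = ∫₀ˣ φ(t)/t dt` (i.e. `X·u' = φ`,
`u(0)=0`), let `v = ∫₀ˣ t/g(t) dt` (i.e. `g·v' = X`, `v(0)=0`), and let `w` be the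
compositional inverse of `u`.  Then `𝔗w = w/w'` is the compositional inverse of
`v`: in the paper's notation, `Q𝔗Q` sends `∫₀ˣ f^{inv}(t)/t dt` to `∫₀ˣ t/(𝔗f)(t) dt`. -/
theorem statement4 (f g φ u v w Tw : PowerSeries ℂ)
    (hf0 : coeff 0 f = 0) (hf1 : coeff 1 f = 1)
    (hg0 : coeff 0 g = 0) (hg1 : coeff 1 g = 1)
    (hg : g * d⁄dX ℂ f = f)
    (hφ0 : coeff 0 φ = 0) (hφ1 : coeff 1 φ = 1)
    (hφ : pcomp f φ = X)
    (hu0 : coeff 0 u = 0) (hu : X * d⁄dX ℂ u = φ)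
    (hv0 : coeff 0 v = 0) (hv : g * d⁄dX ℂ v = X)
    (hw0 : coeff 0 w = 0) (hw1 : coeff 1 w = 1)
    (hw : pcomp u w = X)
    (hTw : Tw * d⁄dX ℂ w = w) :
    pcomp v Tw = X :=
  statement4_general f g φ u v w Tw hg hφ0 hφ hu0 hu hv0 hv hw0 hw hTw
end

section
/- Let f ∈ X + X²ℂ[[X]], let n ≥ 1 be a natural number and q ∈ ℂ. Let E := exp(qXⁿ) and Ẽ := exp(−n·q·Xⁿ) denote the formal power series E = Σ_{k≥0} qᵏX^{nk}/k! and Ẽ = Σ_{k≥0} (−nq)ᵏX^{nk}/k!. Then for every j ≤ n+1, coeff_j(𝔗(f·E)) = coeff_j((𝔗f)·Ẽ); that is, the truncations to order n+1 of 𝔗(f·e^{qXⁿ}) and (𝔗f)·e^{−nqXⁿ} coincide. -/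
open PowerSeries Finset

/-- The formal power series `exp(q·Xⁿ) = Σ_{k≥0} qᵏ X^{nk}/k!`. -/
noncomputable def expPow (n : ℕ) (q : ℂ) : PowerSeries ℂ :=
  PowerSeries.mk fun j => if n ∣ j then q ^ (j / n) / (Nat.factorial (j / n) : ℂ) else 0

lemma expPow_coeff_zero (n : ℕ) (q : ℂ) : coeff 0 (expPow n q) = 1 := by
  simp [expPow]

lemma expPow_expand (n : ℕ) (hn : 1 ≤ n) (c : ℂ) :
    X ^ (2 * n) ∣ expPow n c - (1 + C c * X ^ n) := by
  rw [PowerSeries.X_pow_dvd_iff]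
  intro i hi
  rw [map_sub, map_add, coeff_C_mul, coeff_X_pow, coeff_one]
  simp only [expPow, coeff_mk]
  by_cases hd : n ∣ i
  · obtain ⟨k, rfl⟩ := hd
    have hk2 : k < 2 := by
      by_contra h
      push_neg at h
      have h2 : n * 2 ≤ n * k := Nat.mul_le_mul_left n h
      omega
    interval_cases k
    · have hn0 : ¬ (0 = n) := by omega
      norm_num
      simp [hn0]
    · have h1 : n * 1 = n := by ring
      have hn' : ¬ (n = 0) := by omega
      rw [h1, if_pos (dvd_refl n), if_pos rfl, Nat.div_self (by omega)]
      simp [hn', Nat.factorial]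
  · have h0 : ¬ (n * 0 = 0) → True := fun _ => trivial
    have hi0 : i ≠ 0 := fun h => hd (h ▸ dvd_zero n)
    have hin : i ≠ n := fun h => hd (h ▸ dvd_refl n)
    simp [hd, hi0, hin]

lemma expPow_deriv (m : ℕ) (q : ℂ) :
    d⁄dX ℂ (expPow (m+1) q)
      = C (((m+1 : ℕ) : ℂ) * q) * (X ^ m * expPow (m+1) q) := by
  ext j
  rw [PowerSeries.coeff_derivative, coeff_C_mul, PowerSeries.coeff_X_pow_mul']
  simp only [expPow, coeff_mk]
  by_cases hd : (m+1) ∣ (j+1)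
  · obtain ⟨k, hk⟩ := hd
    have hkpos : k ≠ 0 := by rintro rfl; simp at hk
    obtain ⟨k, rfl⟩ : ∃ k', k = k' + 1 := ⟨k - 1, by omega⟩
    have hexp : (m+1) * (k+1) = (m+1) * k + (m+1) := by ring
    have hle : m ≤ j := by omega
    have hsub : j - m = (m+1) * k := by omega
    have hd2 : (m+1) ∣ (j - m) := ⟨k, hsub⟩
    rw [if_pos ⟨k+1, hk⟩, if_pos hle, if_pos hd2]
    have e1 : (j+1) / (m+1) = k + 1 := by rw [hk, Nat.mul_div_cancel_left _ (by omega)]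
    have e2 : (j - m) / (m+1) = k := by rw [hsub, Nat.mul_div_cancel_left _ (by omega)]
    rw [e1, e2, Nat.factorial_succ]
    have hj : ((j : ℂ) + 1) = ((m : ℂ) + 1) * ((k : ℂ) + 1) := by exact_mod_cast hk
    have hfac : ((k.factorial : ℂ)) ≠ 0 := Nat.cast_ne_zero.mpr k.factorial_ne_zero
    have h2 : (k:ℂ) * k.factorial + k.factorial ≠ 0 := by
      have he : (k:ℂ) * k.factorial + k.factorial = ((k:ℂ)+1) * k.factorial := by ring
      rw [he]
      exact mul_ne_zero (by exact_mod_cast Nat.succ_ne_zero k) hfac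
    have hD : ((k:ℂ)+1) * k.factorial ≠ 0 :=
      mul_ne_zero (by exact_mod_cast Nat.succ_ne_zero k) hfac
    push_cast
    rw [show ((m:ℂ)+1) * q * (q^k / (k.factorial : ℂ))
        = (((m:ℂ)+1) * q * q^k) / (k.factorial : ℂ) from by ring]
    rw [div_mul_eq_mul_div, div_eq_div_iff hD hfac, hj]
    ring
  · rw [if_neg hd, zero_mul]
    by_cases hle : m ≤ j
    · rw [if_pos hle, if_neg, mul_zero]
      rintro ⟨l, hl⟩
      exact hd ⟨l + 1, by rw [Nat.mul_add, Nat.mul_one]; omega⟩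
    · rw [if_neg hle, mul_zero]

/-- **Proposition 1.6.** For `f ∈ X + X²ℂ[[X]]`, `n ≥ 1` and `q ∈ ℂ`, the truncations
to order `n+1` of `𝔗(f·e^{qXⁿ})` and `(𝔗f)·e^{−nqXⁿ}` coincide:
`coeff_j 𝔗(f·E) = coeff_j ((𝔗f)·Ẽ)` for all `j ≤ n+1`, where `E = exp(qXⁿ)`,
`Ẽ = exp(−nqXⁿ)`, and the transforms are characterized by
`T₁·(f·E)' = f·E` and `Tf·f' = f`. -/
theorem statement5 (f : PowerSeries ℂ)
    (h0 : coeff 0 f = 0) (h1 : coeff 1 f = 1)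
    (n : ℕ) (hn : 1 ≤ n) (q : ℂ)
    (T₁ Tf : PowerSeries ℂ)
    (hT₁ : T₁ * d⁄dX ℂ (f * expPow n q) = f * expPow n q)
    (hTf : Tf * d⁄dX ℂ f = f) :
    ∀ j ≤ n + 1, coeff j T₁ = coeff j (Tf * expPow n (-(n : ℂ) * q)) := by
  obtain ⟨m, rfl⟩ : ∃ m, n = m + 1 := ⟨n - 1, by omega⟩
  set E : PowerSeries ℂ := expPow (m+1) q with hEdef
  set Et : PowerSeries ℂ := expPow (m+1) (-((m+1 : ℕ) : ℂ) * q) with hEtdef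
  -- f = X + X² g
  obtain ⟨g, hg⟩ : X ^ 2 ∣ f - X := by
    rw [PowerSeries.X_pow_dvd_iff]
    intro i hi
    have h0' : constantCoeff f = 0 := by
      rw [← coeff_zero_eq_constantCoeff_apply]; exact h0
    interval_cases i <;> simp [h0', h1]
  have hf : f = X + X ^ 2 * g := by rw [← hg]; ring
  -- coefficients of Tf
  have hdf0 : constantCoeff (d⁄dX ℂ f) = 1 := by
    rw [← coeff_zero_eq_constantCoeff_apply, PowerSeries.coeff_derivative]; simp [h1]
  have hTf0 : constantCoeff Tf = 0 := by
    have h := congrArg (constantCoeff) hTf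
    rw [map_mul, hdf0, mul_one] at h
    rw [h, ← coeff_zero_eq_constantCoeff_apply, h0]
  have hTf1 : coeff 1 Tf = 1 := by
    have h := congrArg (coeff 1) hTf
    rw [show coeff 1 (Tf * d⁄dX ℂ f)
        = coeff 0 Tf * coeff 1 (d⁄dX ℂ f) + coeff 1 Tf * coeff 0 (d⁄dX ℂ f) from by
      simp [coeff_mul, Finset.Nat.antidiagonal_succ, Prod.map]] at h
    rw [coeff_zero_eq_constantCoeff_apply, coeff_zero_eq_constantCoeff_apply, hTf0, hdf0,
      zero_mul, zero_add, mul_one, h1] at h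
    exact h
  -- Tf = X + X² t
  obtain ⟨t, ht⟩ : X ^ 2 ∣ Tf - X := by
    rw [PowerSeries.X_pow_dvd_iff]
    intro i hi
    have hTf0' : coeff 0 Tf = 0 := by
      rw [coeff_zero_eq_constantCoeff_apply]; exact hTf0
    interval_cases i <;> simp [hTf0', hTf1, hTf0]
  have hTfx : Tf = X + X ^ 2 * t := by rw [← ht]; ring
  -- E = 1 + X e
  obtain ⟨e, he⟩ : (X : PowerSeries ℂ) ∣ E - 1 := by
    rw [PowerSeries.X_dvd_iff, map_sub, map_one, ← coeff_zero_eq_constantCoeff_apply,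
      expPow_coeff_zero, sub_self]
  have hEe : E = 1 + X * e := by rw [← he]; ring
  have hfEh : f * E = X + X ^ 2 * (e + g + X * (g * e)) := by
    rw [hf, hEe]; ring
  set h : PowerSeries ℂ := e + g + X * (g * e) with hhdef
  -- Et * E = 1 + X v
  obtain ⟨v, hv⟩ : (X : PowerSeries ℂ) ∣ Et * E - 1 := by
    rw [PowerSeries.X_dvd_iff, map_sub, map_one, map_mul,
      ← coeff_zero_eq_constantCoeff_apply, ← coeff_zero_eq_constantCoeff_apply]
    rw [hEtdef, hEdef, expPow_coeff_zero, expPow_coeff_zero]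
    ring
  have hEtE : Et * E = 1 + X * v := by rw [← hv]; ring
  -- Tf * f = X² + X³ w
  have hTff : Tf * f = X ^ 2 + X ^ 3 * (t + g + X * (t * g)) := by
    rw [hTfx, hf]; ring
  set w : PowerSeries ℂ := t + g + X * (t * g) with hwdef
  -- Et expansion
  obtain ⟨s, hs⟩ := expPow_expand (m+1) (by omega) (-((m+1 : ℕ) : ℂ) * q)
  have hEtexp : Et = 1 + C (-((m+1 : ℕ) : ℂ) * q) * X ^ (m+1) + X ^ (2*(m+1)) * s := by
    rw [← hEtdef] at hs
    rw [← hs]; ring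
  set c : ℂ := ((m+1 : ℕ) : ℂ) * q with hc
  -- the key divisibility
  have key : X ^ (m+3) ∣ Tf * Et * d⁄dX ℂ (f * E) - f * E := by
    have hD : d⁄dX ℂ (f * E) = d⁄dX ℂ f * E + f * (C c * (X ^ m * E)) := by
      rw [Derivation.leibniz, smul_eq_mul, smul_eq_mul, hEdef, expPow_deriv]
      ring
    have step : Tf * Et * (d⁄dX ℂ f * E + f * (C c * (X ^ m * E))) - f * E
        = f * E * (Et - 1) + C c * (X ^ m * (Tf * f * (Et * E))) := by
      linear_combination (Et * E) * hTf
    rw [hD, step]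
    have hA : X ^ (m+3) ∣ f * E * (Et - 1) + C c * X ^ (m+2) :=
      ⟨X ^ m * s + X ^ (m+1) * (s * h) - C c * h, by
        rw [hEtexp, hfEh, show -((m+1 : ℕ) : ℂ) * q = -c from by rw [hc]; ring, map_neg]
        ring⟩
    have hB : X ^ (m+3) ∣ C c * (X ^ m * (Tf * f * (Et * E))) - C c * X ^ (m+2) :=
      ⟨C c * (v + w + X * (w * v)), by rw [hTff, hEtE]; ring⟩
    have hsum := dvd_add hA hB
    have heq : (f * E * (Et - 1) + C c * X ^ (m+2))
        + (C c * (X ^ m * (Tf * f * (Et * E))) - C c * X ^ (m+2))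
        = f * E * (Et - 1) + C c * (X ^ m * (Tf * f * (Et * E))) := by ring
    rwa [heq] at hsum
  -- d⁄dX (f * E) is a unit
  have hu : IsUnit (d⁄dX ℂ (f * E)) := by
    rw [PowerSeries.isUnit_iff_constantCoeff]
    rw [← coeff_zero_eq_constantCoeff_apply, PowerSeries.coeff_derivative, hfEh]
    simp [PowerSeries.coeff_X_pow_mul']
  -- transfer divisibility to T₁ - Tf * Et
  have key2 : X ^ (m+3) ∣ T₁ - Tf * Et := by
    have key' : X ^ (m+3) ∣ (T₁ - Tf * Et) * d⁄dX ℂ (f * E) := by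
      rw [sub_mul, hT₁]
      rw [show f * E - Tf * Et * d⁄dX ℂ (f * E)
          = -(Tf * Et * d⁄dX ℂ (f * E) - f * E) from by ring]
      exact dvd_neg.mpr key
    have hdvd1 : d⁄dX ℂ (f * E) ∣ 1 := isUnit_iff_dvd_one.mp hu
    refine key'.trans ?_
    calc (T₁ - Tf * Et) * d⁄dX ℂ (f * E) ∣ (T₁ - Tf * Et) * 1 :=
          mul_dvd_mul_left _ hdvd1
      _ = T₁ - Tf * Et := by ring
  intro j hj
  have hc' := (PowerSeries.X_pow_dvd_iff.mp key2) j (by omega)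
  rw [map_sub, sub_eq_zero] at hc'
  exact hc'
end

section
/- Let f ∈ X + X²ℂ[[X]] satisfy 2·f·f' = (f∘(2X))·((f')² − f·f'') (equivalently, 𝔗²f(X) = f(2X)/2). Then f∘(−X) = −f, i.e. f is odd: coeff_k f = 0 for every even k. -/
/-!
Both `f` and `g := -f(-X)` are normalized solutions, and `f - g` has only even coefficients.
If `f ≠ g`, let `N ≥ 2` be the order of `f - g`. In the `N`-th coefficient of the difference of
the two equations only the leading term of `f - g` survives, giving
`(2(N - 1)² - 2^N) · coeff_N (f - g) = 0`; the factor is nonzero for even `N` since `(N - 1)²` is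
odd. Hence `f = g`.
-/

open PowerSeries

theorem two_mul_add_one_sq_ne_two_pow {n : ℕ} (hn : Even n) : 2 * (n + 1) ^ 2 ≠ 2 ^ (n + 2) := by
  rw [pow_succ 2 (n + 1), mul_comm _ 2]
  intro h
  have hodd : Odd ((n + 1) ^ 2) := hn.add_one.pow
  rw [Nat.mul_left_cancel (by norm_num) h] at hodd
  exact Nat.not_even_iff_odd.mpr hodd (Nat.even_pow.mpr ⟨even_two, by omega⟩)

namespace PowerSeries

variable {R : Type*} [CommRing R]

theorem X_pow_dvd_derivative {n : ℕ} {φ : R⟦X⟧} (h : X ^ (n + 1) ∣ φ) :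
    X ^ n ∣ d⁄dX R φ := by
  rw [X_pow_dvd_iff] at h ⊢
  intro m hm
  rw [coeff_derivative, h (m + 1) (by omega), zero_mul]

theorem X_pow_dvd_rescale {n : ℕ} {φ : R⟦X⟧} (a : R) (h : X ^ n ∣ φ) : X ^ n ∣ rescale a φ := by
  rw [X_pow_dvd_iff] at h ⊢
  intro m hm
  rw [coeff_rescale, h m hm, mul_zero]

theorem coeff_add_mul_of_X_pow_dvd {a b : ℕ} {φ ψ : R⟦X⟧} (hφ : X ^ a ∣ φ) (hψ : X ^ b ∣ ψ) :
    coeff (a + b) (φ * ψ) = coeff a φ * coeff b ψ := by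
  have coeff_X_pow_mul_self (c : ℕ) (χ : R⟦X⟧) : coeff c (X ^ c * χ) = constantCoeff χ := by
    simpa using coeff_X_pow_mul χ c 0
  obtain ⟨φ, rfl⟩ := hφ
  obtain ⟨ψ, rfl⟩ := hψ
  rw [mul_mul_mul_comm, ← pow_add, coeff_X_pow_mul_self, coeff_X_pow_mul_self,
    coeff_X_pow_mul_self, map_mul]

theorem coeff_zero_derivative (φ : R⟦X⟧) : coeff 0 (d⁄dX R φ) = coeff 1 φ := by
  simp [coeff_derivative]

theorem derivative_rescale (a : R) (φ : R⟦X⟧) :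
    d⁄dX R (rescale a φ) = C a * rescale a (d⁄dX R φ) := by
  ext n
  simp only [coeff_derivative, coeff_rescale, coeff_C_mul]
  ring

/-- `𝔗²f = f·f' / t2Denom f`, so `t2Defect f = 0` is the equation `𝔗²f(X) = f(2X)/2` with the
denominators cleared. -/
noncomputable def t2Denom (f : R⟦X⟧) : R⟦X⟧ := d⁄dX R f ^ 2 - f * d⁄dX R (d⁄dX R f)

noncomputable def t2Defect (f : R⟦X⟧) : R⟦X⟧ := 2 * f * d⁄dX R f - rescale 2 f * t2Denom f

theorem t2Defect_neg_rescale_neg_one (f : R⟦X⟧) :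
    t2Defect (-rescale (-1) f) = -rescale (-1) (t2Defect f) := by
  have hrescale_comm : rescale (2 : R) (rescale (-1) f) = rescale (-1) (rescale 2 f) := by
    rw [rescale_rescale, rescale_rescale, mul_comm]
  simp only [t2Defect, t2Denom, map_neg, derivative_rescale, hrescale_comm, map_sub, map_mul, map_pow,
    map_ofNat, map_one, Derivation.leibniz, derivative_one]
  ring

theorem t2Denom_sub_t2Denom (f g : R⟦X⟧) :
    t2Denom f - t2Denom g = d⁄dX R (f - g) * (d⁄dX R f + d⁄dX R g) -
      (f - g) * d⁄dX R (d⁄dX R f) - d⁄dX R (d⁄dX R (f - g)) * g := by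
  simp only [t2Denom, map_sub]
  ring

theorem t2Defect_sub_t2Defect (f g : R⟦X⟧) :
    t2Defect f - t2Defect g =
      2 * ((f - g) * d⁄dX R f + d⁄dX R (f - g) * g) - rescale 2 (f - g) * t2Denom f -
        (t2Denom f - t2Denom g) * rescale 2 g := by
  simp only [t2Defect, map_sub]
  ring

theorem coeff_zero_t2Denom {f : R⟦X⟧} (h0 : coeff 0 f = 0) (h1 : coeff 1 f = 1) :
    coeff 0 (t2Denom f) = 1 := by
  rw [t2Denom, map_sub, sq, coeff_add_mul_of_X_pow_dvd (a := 0) (b := 0) (by simp) (by simp),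
    coeff_add_mul_of_X_pow_dvd (a := 0) (b := 0) (by simp) (by simp), coeff_zero_derivative, h0, h1]
  ring

section FirstOrder

variable {f g : R⟦X⟧} {n : ℕ}

theorem X_pow_dvd_t2Denom_sub_t2Denom (hg : X ^ 1 ∣ g) (hfg : X ^ (n + 2) ∣ f - g) :
    X ^ (n + 1) ∣ t2Denom f - t2Denom g := by
  have hD := X_pow_dvd_derivative hfg
  rw [t2Denom_sub_t2Denom]
  refine dvd_sub (dvd_sub (dvd_mul_of_dvd_left hD _) ?_) ?_
  · exact dvd_mul_of_dvd_left ((pow_dvd_pow X (by omega)).trans hfg) _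
  · rw [pow_add]
    exact mul_dvd_mul (X_pow_dvd_derivative hD) hg

theorem coeff_t2Denom_sub_t2Denom (hf1 : coeff 1 f = 1) (hg : X ^ 1 ∣ g) (hg1 : coeff 1 g = 1)
    (hfg : X ^ (n + 2) ∣ f - g) :
    coeff (n + 1) (t2Denom f - t2Denom g) = (n + 2) * (1 - n) * coeff (n + 2) (f - g) := by
  have hD := X_pow_dvd_derivative hfg
  have hvanish : coeff (n + 1) ((f - g) * d⁄dX R (d⁄dX R f)) = 0 :=
    X_pow_dvd_iff.mp (dvd_mul_of_dvd_left hfg _) _ (by omega)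
  rw [t2Denom_sub_t2Denom, map_sub, map_sub, hvanish,
    coeff_add_mul_of_X_pow_dvd (b := 0) hD (by simp),
    coeff_add_mul_of_X_pow_dvd (b := 1) (X_pow_dvd_derivative hD) hg, map_add]
  simp only [coeff_derivative, hf1, hg1]
  push_cast
  ring

theorem coeff_t2Defect_sub_t2Defect (hf0 : coeff 0 f = 0) (hf1 : coeff 1 f = 1)
    (hg0 : coeff 0 g = 0) (hg1 : coeff 1 g = 1) (hfg : X ^ (n + 2) ∣ f - g) :
    coeff (n + 2) (t2Defect f - t2Defect g) =
      (2 * (n + 1) ^ 2 - 2 ^ (n + 2)) * coeff (n + 2) (f - g) := by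
  have hg : X ^ 1 ∣ g := X_pow_dvd_iff.mpr fun m hm ↦ by rwa [Nat.lt_one_iff.mp hm]
  -- each product contributes only the product of the lowest coefficients of its two factors
  rw [t2Defect_sub_t2Defect, map_sub, map_sub, two_mul, map_add, map_add,
    coeff_add_mul_of_X_pow_dvd (b := 0) hfg (by simp),
    coeff_add_mul_of_X_pow_dvd (b := 1) (X_pow_dvd_derivative hfg) hg,
    coeff_add_mul_of_X_pow_dvd (b := 0) (X_pow_dvd_rescale 2 hfg) (by simp),
    coeff_add_mul_of_X_pow_dvd (b := 1) (X_pow_dvd_t2Denom_sub_t2Denom hg hfg)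
      (X_pow_dvd_rescale 2 hg),
    coeff_t2Denom_sub_t2Denom hf1 hg hg1 hfg, coeff_zero_t2Denom hf0 hf1, coeff_zero_derivative,
    coeff_derivative, coeff_rescale, coeff_rescale, hf1, hg1]
  push_cast
  ring

end FirstOrder

variable [IsDomain R] [CharZero R]

theorem rescale_neg_one_eq_neg_of_t2Defect_eq_zero {f : R⟦X⟧} (h0 : coeff 0 f = 0)
    (h1 : coeff 1 f = 1) (hf : t2Defect f = 0) : rescale (-1) f = -f := by
  set g := -rescale (-1) f
  have hg0 : coeff 0 g = 0 := by simp only [g, map_neg, coeff_rescale, h0, mul_zero, neg_zero]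
  have hg1 : coeff 1 g = 1 := by simp [g, h1]
  have hg : t2Defect g = 0 := by simp [g, t2Defect_neg_rescale_neg_one, hf]
  have hfg_coeff (k : ℕ) : coeff k (f - g) = (1 + (-1) ^ k) * coeff k f := by
    simp only [g, sub_neg_eq_add, map_add, coeff_rescale]
    ring
  suffices f - g = 0 by rw [sub_eq_zero] at this; exact neg_eq_iff_eq_neg.mp this.symm
  by_contra hfg
  set N := (f - g).order.toNat
  have hN : coeff N (f - g) ≠ 0 := coeff_order hfg
  have hN_even : Even N := by
    by_contra hN_odd
    rw [hfg_coeff, (Nat.not_even_iff_odd.mp hN_odd).neg_one_pow, add_neg_cancel, zero_mul] at hN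
    exact hN rfl
  obtain ⟨n, hn⟩ : ∃ n, N = n + 2 := by
    have : N ≠ 0 := fun h ↦ hN (by rw [h, map_sub, h0, hg0, sub_zero])
    exact ⟨N - 2, by grind⟩
  have hdvd : X ^ N ∣ f - g := X_pow_order_dvd
  rw [hn] at hdvd hN hN_even
  have hn_even : Even n := by simpa [Nat.even_add] using hN_even
  have key := coeff_t2Defect_sub_t2Defect h0 h1 hg0 hg1 hdvd
  rw [hf, hg, sub_zero, map_zero, eq_comm, mul_eq_zero, sub_eq_zero] at key
  exact key.elim (fun h ↦ two_mul_add_one_sq_ne_two_pow hn_even (by exact_mod_cast h)) hN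

theorem coeff_eq_zero_of_rescale_neg_one_eq_neg {f : R⟦X⟧} (hf : rescale (-1) f = -f) {k : ℕ}
    (hk : Even k) : coeff k f = 0 := by
  have hk_coeff := congrArg (coeff k) hf
  rw [coeff_rescale, hk.neg_one_pow, one_mul, map_neg] at hk_coeff
  exact self_eq_neg.mp hk_coeff

end PowerSeries

/-- **Proposition 1.7.** If `f ∈ X + X²ℂ[[X]]` satisfies `𝔗²f(X) = f(2X)/2`,
written division-free as `2·f·f' = (f∘(2X))·((f')² − f·f'')`, then `f` is odd:
`f(−X) = −f(X)`, i.e. all coefficients of even powers of `X` vanish. -/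
theorem statement6 (f : PowerSeries ℂ)
    (h0 : coeff 0 f = 0) (h1 : coeff 1 f = 1)
    (heq : 2 * f * d⁄dX ℂ f =
      rescale 2 f * ((d⁄dX ℂ f) ^ 2 - f * d⁄dX ℂ (d⁄dX ℂ f))) :
    rescale (-1) f = -f ∧ ∀ k : ℕ, Even k → coeff k f = 0 := by
  have hodd := rescale_neg_one_eq_neg_of_t2Defect_eq_zero h0 h1 (sub_eq_zero.mpr heq)
  exact ⟨hodd, fun _ hk ↦ coeff_eq_zero_of_rescale_neg_one_eq_neg hodd hk⟩
end

section
/- Let f, g ∈ X + X²ℂ[[X]] both satisfy the equation 2·h·h' = (h∘(2X))·((h')² − h·h'') (i.e. 𝔗²h(X) = h(2X)/2), and suppose coeff_3 f = coeff_3 g and coeff_5 f = coeff_5 g. Then f = g. (This is the content of Proposition 1.8: a solution of 𝔗²f = f(2X)/2 is uniquely determined by its coefficients of X³ and X⁵, which is why any solution with the appropriate initial coefficients must equal Θ_k(AX)/A.) -/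
/-!
Suppose `f ≠ g` and let `n` be the order of `e = g - f`; the normalization gives `n ≥ 2`.
Expanding the defect `D h = 2 h h' - h(2X) ((h')² - h h'')` around `f`, the coefficient of `Xⁿ`
in `D (f + e) - D f` sees `e` only through `eₙ`, and equals `(2 (n - 1)² - 2ⁿ) eₙ`. Both defects
vanish, and `(n - 1)² = 2ⁿ⁻¹` only for `n = 3, 5`, where `eₙ = 0` by hypothesis.
-/

open PowerSeries Finset

theorem Nat.sq_lt_two_pow {k : ℕ} (hk : 5 ≤ k) : k ^ 2 < 2 ^ k := by
  induction k, hk using Nat.le_induction with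
  | base => norm_num
  | succ k hk ih =>
    have : 2 ^ (k + 1) = 2 * 2 ^ k := by ring
    nlinarith

theorem Nat.sq_eq_two_pow_iff {k : ℕ} : k ^ 2 = 2 ^ k ↔ k = 2 ∨ k = 4 := by
  refine ⟨fun h => ?_, by rintro (rfl | rfl) <;> rfl⟩
  by_contra hk
  have : k < 5 := by
    by_contra! h5
    exact (Nat.sq_lt_two_pow h5).ne h
  interval_cases k <;> simp_all

theorem two_mul_succ_sq_sub_two_pow_eq_zero_iff {K : Type*} [CommRing K] [CharZero K] {m : ℕ} :
    2 * ((m : K) + 1) ^ 2 - 2 ^ (m + 2) = 0 ↔ m = 1 ∨ m = 3 := by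
  have : 2 * ((m : K) + 1) ^ 2 - 2 ^ (m + 2) =
      ((2 * (m + 1) ^ 2 : ℕ) : K) - ((2 * 2 ^ (m + 1) : ℕ) : K) := by
    push_cast; ring
  rw [this, sub_eq_zero, Nat.cast_inj, Nat.mul_left_cancel_iff two_pos, Nat.sq_eq_two_pow_iff]
  omega

namespace PowerSeries

variable {R : Type*} [CommRing R]

theorem coeff_add_mul_eq_sum (P : R⟦X⟧) {E : R⟦X⟧} {n : ℕ} (hE : ∀ i < n, coeff i E = 0)
    (j : ℕ) :
    coeff (n + j) (P * E) = ∑ i ∈ range (j + 1), coeff i P * coeff (n + j - i) E := by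
  rw [coeff_mul, Nat.sum_antidiagonal_eq_sum_range_succ_mk,
    ← sum_range_add_sum_Ico _ (by omega : j + 1 ≤ n + j + 1), add_eq_left]
  refine sum_eq_zero fun i hi => ?_
  rw [hE _ (by rw [mem_Ico] at hi; omega), mul_zero]

theorem coeff_derivative_eq_zero_of_lt {e : R⟦X⟧} {n : ℕ} (he : ∀ i < n + 1, coeff i e = 0) :
    ∀ i < n, coeff i (d⁄dX R e) = 0 := fun i hi => by
  rw [coeff_derivative, he _ (by omega), zero_mul]

/-- `tSqDefect h = 0` is the division-free form of `𝔗²h(X) = h(2X)/2`. -/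
noncomputable def tSqDefect (h : R⟦X⟧) : R⟦X⟧ :=
  2 * h * d⁄dX R h - rescale 2 h * ((d⁄dX R h) ^ 2 - h * d⁄dX R (d⁄dX R h))

theorem coeff_tSqDefect_add {f e : R⟦X⟧} (hf0 : coeff 0 f = 0) (hf1 : coeff 1 f = 1) {m : ℕ}
    (he : ∀ i < m + 2, coeff i e = 0) :
    coeff (m + 2) (tSqDefect (f + e)) =
      coeff (m + 2) (tSqDefect f) + (2 * (m + 1) ^ 2 - 2 ^ (m + 2)) * coeff (m + 2) e := by
  set f' := d⁄dX R f
  set f'' := d⁄dX R f'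
  set e' := d⁄dX R e
  set e'' := d⁄dX R e'
  set A := 2 * f + 2 * e - rescale 2 f * (2 * f' + e')
  set B := 2 * f' + rescale 2 f * f''
  set C := rescale 2 f * (f + e)
  set D := (f' + e') ^ 2 - (f + e) * (f'' + e'')
  have hdiff : tSqDefect (f + e) = tSqDefect f + A * e' + B * e + C * e'' - D * rescale 2 e := by
    simp only [tSqDefect, A, B, C, D, map_add]; ring
  have he' : ∀ i < m + 1, coeff i e' = 0 := coeff_derivative_eq_zero_of_lt he
  have he'' : ∀ i < m, coeff i e'' = 0 := coeff_derivative_eq_zero_of_lt he'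
  have hE : ∀ i < m + 2, coeff i (rescale (2 : R) e) = 0 := fun i hi => by
    rw [coeff_rescale, he i hi, mul_zero]
  have hA := coeff_add_mul_eq_sum A he' 1
  have hB := coeff_add_mul_eq_sum B he 0
  have hC := coeff_add_mul_eq_sum C he'' 2
  have hD := coeff_add_mul_eq_sum D hE 0
  simp only [sum_range_succ, sum_range_zero] at hA hB hC hD
  have he0 : constantCoeff e = 0 := by simpa using he 0 (by omega)
  have he1 : coeff 1 e = 0 := he 1 (by omega)
  have hf0' : constantCoeff f = 0 := by simpa using hf0
  have hf'0 : constantCoeff f' = 1 := by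
    simp [f', ← coeff_zero_eq_constantCoeff_apply, coeff_derivative, hf1]
  have he'0 : constantCoeff e' = 0 := by
    simp [e', ← coeff_zero_eq_constantCoeff_apply, coeff_derivative, he1]
  have hF0 : constantCoeff (rescale (2 : R) f) = 0 := by
    simp [← coeff_zero_eq_constantCoeff_apply, coeff_rescale, hf0]
  have hF1 : coeff 1 (rescale (2 : R) f) = 2 := by simp [coeff_rescale, hf1]
  have hA0 : coeff 0 A = 0 := by simp [A, two_mul, hf0', he0, hF0]
  have hA1 : coeff 1 A = -2 := by
    simp only [A, two_mul, map_sub, map_add, coeff_one_mul, hf1, he1, hf'0, he'0, hF0, hF1]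
    norm_num
  have hB0 : coeff 0 B = 2 := by simp [B, two_mul, hf'0, hF0, one_add_one_eq_two]
  have hC0 : coeff 0 C = 0 := by simp [C, hF0]
  have hC1 : coeff 1 C = 0 := by simp [C, coeff_one_mul, hf0', he0, hF0]
  have hC2 : coeff 2 C = 2 := by
    simp [C, coeff_mul, Nat.sum_antidiagonal_eq_sum_range_succ_mk, sum_range_succ, hf0', he0,
      hf1, he1]
  have hD0 : coeff 0 D = 1 := by simp [D, hf0', he0, hf'0, he'0]
  -- The leading coefficient of `e` meets only `A₁`, `B₀`, `C₂` and `D₀`, contributing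
  -- `-2 (m + 2)`, `2`, `2 (m + 2) (m + 1)` and `-2 ^ (m + 2)`.
  rw [hdiff]
  simp only [map_add, map_sub]
  rw [hA, hB, hC, hD]
  simp only [hA0, hA1, hB0, hC0, hC1, hC2, hD0, e', e'', coeff_derivative, coeff_rescale,
    tsub_zero, add_tsub_cancel_right, Nat.add_one_sub_one, Nat.cast_add, Nat.cast_one,
    Nat.cast_ofNat, zero_mul, add_zero, zero_add, one_mul, neg_mul]
  ring

end PowerSeries

/-- **Proposition 1.8.** A normalized solution of `𝔗²f(X) = f(2X)/2` (division-free: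
`2·f·f' = (f∘(2X))·((f')² − f·f'')`) is uniquely determined by its coefficients of
`X³` and `X⁵`: if two such solutions agree there, they are equal. -/
theorem statement9 (f g : PowerSeries ℂ)
    (hf0 : coeff 0 f = 0) (hf1 : coeff 1 f = 1)
    (hg0 : coeff 0 g = 0) (hg1 : coeff 1 g = 1)
    (heqf : 2 * f * d⁄dX ℂ f =
      rescale 2 f * ((d⁄dX ℂ f) ^ 2 - f * d⁄dX ℂ (d⁄dX ℂ f)))
    (heqg : 2 * g * d⁄dX ℂ g =
      rescale 2 g * ((d⁄dX ℂ g) ^ 2 - g * d⁄dX ℂ (d⁄dX ℂ g)))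
    (h3 : coeff 3 f = coeff 3 g) (h5 : coeff 5 f = coeff 5 g) :
    f = g := by
  by_contra hne
  obtain ⟨n, hn⟩ :=
    ENat.ne_top_iff_exists.mp (order_eq_top.not.mpr (sub_ne_zero.mpr (Ne.symm hne)))
  obtain ⟨hgfn, hgf⟩ := order_eq_nat.mp hn.symm
  obtain ⟨m, rfl⟩ : ∃ m, n = m + 2 := by
    refine Nat.exists_eq_add_of_le' ((Nat.two_le_iff n).mpr ⟨?_, ?_⟩) <;> rintro rfl
    · exact hgfn (by rw [map_sub, hf0, hg0, sub_self])
    · exact hgfn (by rw [map_sub, hf1, hg1, sub_self])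
  have hf : tSqDefect f = 0 := sub_eq_zero.mpr heqf
  have hg : tSqDefect g = 0 := sub_eq_zero.mpr heqg
  have hdefect := coeff_tSqDefect_add hf0 hf1 hgf
  rw [add_sub_cancel, hf, hg, map_zero, zero_add, eq_comm, mul_eq_zero, or_iff_left hgfn,
    two_mul_succ_sq_sub_two_pow_eq_zero_iff] at hdefect
  obtain rfl | rfl := hdefect
  · exact hgfn (by rw [map_sub, h3, sub_self])
  · exact hgfn (by rw [map_sub, h5, sub_self])
end

section
/- Let F := X·(1 + X + X²/8)⁻¹ ∈ X + X²ℂ[[X]], let h ∈ X + X²ℂ[[X]] be the compositional inverse of F (F∘h = X and h∘F = X), and let s ∈ ℂ[[X]] be the unique power series with coeff_0 s = 1 and s² = 1 − 2X + X²/2. Then h = X·s·h', i.e. 𝔗h = h/h' = X·√(1 − 2X + X²/2). (This is the boxed identity φ₂(x) = ln(1 + x + x²/8): the series φ₂ satisfies 𝔗Q(X·e^{−φ₂(X)}) = X·e^{(1/2)φ₂(−2X)}, giving the solution of 𝔗f = f(pX)/p for p² = −2.) -/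
/-! The compositional inverse `h` of `X / u`, `u = 1 + X + X²/8`, satisfies the Lagrange
equation `h = X · u(h)`. Differentiating it gives `h' = u(h) + X u'(h) h'`, i.e.
`h = X (1 - X u'(h)) h'`, and the same equation shows `(1 - X u'(h))² = 1 - 2X + X²/2`.
Both square roots of `1 - 2X + X²/2` with constant term `1` agree, so `s = 1 - X u'(h)`. -/

open PowerSeries Finset

/-- The series `F = X·(1 + X + X²/8)⁻¹ = X·e^{−φ₂(X)}` where `φ₂(x) = ln(1+x+x²/8)`. -/
noncomputable def F₂ : PowerSeries ℂ := X * (1 + X + C (1 / 8 : ℂ) * X ^ 2)⁻¹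

namespace PowerSeries

section CommRing

variable {R : Type*} [CommRing R]

theorem coeff_pow_eq_zero_of_lt {g : R⟦X⟧} (hg : constantCoeff g = 0) {n k : ℕ} (hnk : n < k) :
    coeff n (g ^ k) = 0 :=
  coeff_of_lt_order _ <| (ENat.natCast_lt_natCast.mpr hnk).trans_le <|
    le_order_pow_of_constantCoeff_eq_zero k hg

theorem subst_one_add_X_add_C_mul_X_sq {h : R⟦X⟧} (hh : HasSubst h) (c : R) :
    (1 + X + C c * X ^ 2 : R⟦X⟧).subst h = 1 + h + C c * h ^ 2 := by
  rw [← coe_substAlgHom hh]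
  simp only [map_add, map_one, map_mul, map_pow, substAlgHom_X]
  rw [coe_substAlgHom, subst_C]
  rfl

theorem eq_X_mul_mul_derivative_of_eq_X_mul_quadratic {h : R⟦X⟧} (c : R)
    (E : h = X * (1 + h + C c * h ^ 2)) :
    h = X * (1 - X - 2 * C c * X * h) * d⁄dX R h := by
  have E' : d⁄dX R h = (1 + h + C c * h ^ 2) + X * (1 + 2 * C c * h) * d⁄dX R h := by
    have E2 := congrArg (d⁄dX R) (show h = X * (1 + h + C c * (h * h)) by rwa [← sq])
    simp only [Derivation.leibniz, smul_eq_mul, map_add, derivative_X, derivative_C,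
      Derivation.map_one_eq_zero] at E2
    linear_combination E2
  linear_combination E - X * E'

theorem one_sub_X_sub_mul_sq_of_eq_X_mul_quadratic {h : R⟦X⟧} (c : R)
    (E : h = X * (1 + h + C c * h ^ 2)) :
    (1 - X - 2 * C c * X * h) ^ 2 = 1 - 2 * X + C (1 - 4 * c) * X ^ 2 := by
  simp only [map_sub, map_one, map_mul, map_ofNat]
  linear_combination -4 * C c * X * E

end CommRing

theorem eq_X_mul_subst_of_subst_X_mul_inv {k : Type*} [Field k] {u h : k⟦X⟧}
    (hu : constantCoeff u ≠ 0) (hh : HasSubst h) (H : (X * u⁻¹).subst h = X) :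
    h = X * u.subst h := by
  have hinv : u.subst h * u⁻¹.subst h = 1 := by
    rw [← subst_mul hh, PowerSeries.mul_inv_cancel u hu, ← coe_substAlgHom hh, map_one]
  rw [subst_mul hh, subst_X hh] at H
  linear_combination u.subst h * H - h * hinv

end PowerSeries

theorem pcomp_eq_subst_s10 (f : ℂ⟦X⟧) {g : ℂ⟦X⟧} (hg : constantCoeff g = 0) :
    pcomp f g = f.subst g := by
  ext n
  rw [coeff_subst' (HasSubst.of_constantCoeff_zero' hg), pcomp, coeff_mk,
    finsum_eq_sum_of_support_subset _ (s := range (n + 1))]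
  · rfl
  · intro k hk
    rw [coe_range, Set.mem_Iio]
    by_contra! hkn
    exact hk (by simp [coeff_pow_eq_zero_of_lt hg hkn])

theorem statement10_general (h : PowerSeries ℂ)
    (hh0 : coeff 0 h = 0)
    (hinv1 : pcomp F₂ h = X)
    (s : PowerSeries ℂ)
    (hs0 : coeff 0 s = 1)
    (hs : s ^ 2 = 1 - 2 * X + C (1 / 2 : ℂ) * X ^ 2) :
    h = X * s * d⁄dX ℂ h := by
  rw [coeff_zero_eq_constantCoeff_apply] at hh0 hs0
  have hh : HasSubst h := HasSubst.of_constantCoeff_zero' hh0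
  have hlagrange : h = X * (1 + h + C (1 / 8) * h ^ 2) := by
    rw [← subst_one_add_X_add_C_mul_X_sq hh]
    refine eq_X_mul_subst_of_subst_X_mul_inv (by simp) hh ?_
    rwa [← pcomp_eq_subst_s10 _ hh0]
  have hs_eq : s = 1 - X - 2 * C (1 / 8) * X * h := by
    have hsq := one_sub_X_sub_mul_sq_of_eq_X_mul_quadratic _ hlagrange
    rw [show (1 - 4 * (1 / 8) : ℂ) = 1 / 2 by norm_num, ← hs] at hsq
    refine (sq_eq_sq_iff_eq_or_eq_neg.1 hsq.symm).resolve_right fun hneg => ?_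
    have := congrArg constantCoeff hneg
    norm_num [hs0] at this
  rw [hs_eq]
  exact eq_X_mul_mul_derivative_of_eq_X_mul_quadratic _ hlagrange

/-- **The boxed identity `φ₂(x) = ln(1 + x + x²/8)`.**  Let `h` be the compositional
inverse of `F₂ = X·(1+X+X²/8)⁻¹` and let `s` be the square root of `1 − 2X + X²/2`
with constant term `1`.  Then `𝔗h = h/h' = X·√(1 − 2X + X²/2)`, i.e.
`h = X·s·h'`.  (This expresses `𝔗Q(X·e^{−φ₂(X)}) = X·e^{(1/2)φ₂(−2X)}`, the
solution of `𝔗f = f(pX)/p` for `p² = −2`.) -/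
theorem statement10 (h : PowerSeries ℂ)
    (hh0 : coeff 0 h = 0) (hh1 : coeff 1 h = 1)
    (hinv1 : pcomp F₂ h = X) (hinv2 : pcomp h F₂ = X)
    (s : PowerSeries ℂ)
    (hs0 : coeff 0 s = 1)
    (hs : s ^ 2 = 1 - 2 * X + C (1 / 2 : ℂ) * X ^ 2) :
    h = X * s * d⁄dX ℂ h :=
  statement10_general h hh0 hinv1 s hs0 hs
end

section
/- Let q ∈ X + X²ℂ[[X]] and c ∈ ℂ satisfy (q')² − q·q'' = exp(cX), where exp(cX) := Σ_{k≥0} cᵏXᵏ/k!. Then there exist c₁, c₂ ∈ ℂ such that q = Δ_{c₁}·exp(−c₂X), where Δ_p := Σ_{k≥1} p^{k−1}Xᵏ/k! (so Δ_p = (e^{pX}−1)/p for p ≠ 0 and Δ₀ = X). In particular there exists C ∈ ℂ with q'' − c·q' = C·q. -/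
/-!
Differentiating `(q')² − q q'' = e^{cX}` gives `q' q'' − q q''' = c ((q')² − q q'')`, i.e. the
Wronskian of `q` and `g := q'' − c q'` vanishes. Since `q` has a simple zero at `0`, this forces
`g = K q` for a constant `K`. The solutions of `y'' − c y' = K y` with `y(0) = 0`, `y'(0) = 1`
are determined by these initial values, and `Δ_d e^{sX}` is one of them once `s` and `s + d` are
the roots of the characteristic polynomial `r² − c r − K`.
-/

open PowerSeries

/-- `Δ_p = (e^{pX} − 1)/p`, the power series with coefficient `p^{k−1}/k!` at `Xᵏ`
for `k ≥ 1` (and `Δ₀ = X`). -/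
noncomputable def Delta (p : ℂ) : PowerSeries ℂ :=
  PowerSeries.mk fun k => if k = 0 then 0 else p ^ (k - 1) / (k.factorial : ℂ)

/-- The power series `exp(cX) = Σ_{k≥0} cᵏXᵏ/k!`. -/
noncomputable def expC (c : ℂ) : PowerSeries ℂ :=
  PowerSeries.mk fun k => c ^ k / (k.factorial : ℂ)

section CharZeroField

variable {𝕜 : Type*} [Field 𝕜] [CharZero 𝕜]

theorem PowerSeries.eq_C_constantCoeff_of_derivative_eq_zero {w : 𝕜⟦X⟧} (hw : d⁄dX 𝕜 w = 0) :
    w = C (constantCoeff w) :=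
  derivative.ext (by rw [hw, derivative_C]) (by rw [constantCoeff_C])

theorem PowerSeries.exists_eq_C_mul_of_mul_derivative_eq {q h : 𝕜⟦X⟧} (hq0 : coeff 0 q = 0)
    (hq1 : coeff 1 q ≠ 0) (hw : q * d⁄dX 𝕜 h = d⁄dX 𝕜 q * h) : ∃ K, h = C K * q := by
  obtain ⟨u, rfl⟩ : X ∣ q := X_dvd_iff.mpr (by rwa [← coeff_zero_eq_constantCoeff_apply])
  have hu : constantCoeff u ≠ 0 := by rwa [coeff_succ_X_mul, coeff_zero_eq_constantCoeff] at hq1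
  obtain ⟨v, rfl⟩ : X ∣ h := by
    rw [X_dvd_iff]
    have := congrArg constantCoeff hw
    simp only [Derivation.leibniz, derivative_X, smul_eq_mul, map_mul, map_add,
      constantCoeff_X, zero_mul, mul_one, zero_add] at this
    exact (mul_eq_zero.mp this.symm).resolve_left hu
  have huv : u * d⁄dX 𝕜 v = d⁄dX 𝕜 u * v := by
    have hX2 : (X : 𝕜⟦X⟧) * X ≠ 0 := mul_ne_zero X_ne_zero X_ne_zero
    refine mul_left_cancel₀ hX2 ?_
    simp only [Derivation.leibniz, derivative_X, smul_eq_mul] at hw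
    linear_combination hw
  set w := v * u⁻¹
  have hvw : v = w * u := by rw [mul_assoc, mul_comm u⁻¹, PowerSeries.mul_inv_cancel u hu, mul_one]
  have hw' : d⁄dX 𝕜 w = 0 := by
    have hu2 : u ^ 2 ≠ 0 := pow_ne_zero 2 fun hu0 => hu (by rw [hu0, map_zero])
    refine (mul_eq_zero.mp ?_).resolve_left hu2
    rw [hvw, Derivation.leibniz, smul_eq_mul, smul_eq_mul] at huv
    linear_combination huv
  refine ⟨constantCoeff w, ?_⟩
  rw [hvw, ← eq_C_constantCoeff_of_derivative_eq_zero hw']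
  ring

theorem PowerSeries.eq_of_derivative_derivative_sub_eq {a b : 𝕜} {y z : 𝕜⟦X⟧}
    (hy : d⁄dX 𝕜 (d⁄dX 𝕜 y) - C a * d⁄dX 𝕜 y = C b * y)
    (hz : d⁄dX 𝕜 (d⁄dX 𝕜 z) - C a * d⁄dX 𝕜 z = C b * z)
    (h0 : coeff 0 y = coeff 0 z) (h1 : coeff 1 y = coeff 1 z) : y = z := by
  ext n
  induction n using Nat.strong_induction_on with
  | _ n ih =>
    match n with
    | 0 => exact h0
    | 1 => exact h1
    | m + 2 =>
      have hym := congrArg (coeff m) hy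
      have hzm := congrArg (coeff m) hz
      simp only [map_sub, coeff_C_mul, coeff_derivative] at hym hzm
      rw [ih m (by omega), ih (m + 1) (by omega)] at hym
      have hm : ((m : 𝕜) + 1 + 1) * ((m : 𝕜) + 1) ≠ 0 := by norm_cast
      refine mul_right_cancel₀ hm ?_
      push_cast at hym hzm ⊢
      linear_combination hym - hzm

end CharZeroField

theorem derivative_expC (c : ℂ) : d⁄dX ℂ (expC c) = C c * expC c := by
  ext n
  rw [coeff_derivative, coeff_C_mul]
  simp only [expC, coeff_mk, Nat.factorial_succ, pow_succ, Nat.cast_mul]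
  have : (n.factorial : ℂ) ≠ 0 := Nat.cast_ne_zero.mpr n.factorial_ne_zero
  field_simp
  push_cast
  ring

theorem derivative_Delta (p : ℂ) : d⁄dX ℂ (Delta p) = expC p := by
  ext n
  rw [coeff_derivative]
  simp only [Delta, expC, coeff_mk, Nat.succ_ne_zero, if_false, Nat.add_sub_cancel,
    Nat.factorial_succ, Nat.cast_mul]
  have : (n.factorial : ℂ) ≠ 0 := Nat.cast_ne_zero.mpr n.factorial_ne_zero
  field_simp
  push_cast
  ring

theorem derivative_derivative_Delta_mul_expC (d s : ℂ) :
    d⁄dX ℂ (d⁄dX ℂ (Delta d * expC s)) - C (d + 2 * s) * d⁄dX ℂ (Delta d * expC s) =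
      C (-(s * (d + s))) * (Delta d * expC s) := by
  simp only [Derivation.leibniz, derivative_expC, derivative_Delta, derivative_C, smul_eq_mul,
    map_add, map_mul, map_neg, map_ofNat]
  ring

theorem exists_eq_Delta_mul_expC {a b : ℂ} {y : ℂ⟦X⟧}
    (hy : d⁄dX ℂ (d⁄dX ℂ y) - C a * d⁄dX ℂ y = C b * y)
    (h0 : coeff 0 y = 0) (h1 : coeff 1 y = 1) : ∃ d s : ℂ, y = Delta d * expC s := by
  obtain ⟨d, hd⟩ := IsAlgClosed.exists_pow_nat_eq (a ^ 2 + 4 * b) two_pos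
  set s := (a - d) / 2
  have ha : a = d + 2 * s := by ring
  have hb : b = -(s * (d + s)) := by linear_combination (-1 / 4 : ℂ) * hd
  refine ⟨d, s, eq_of_derivative_derivative_sub_eq hy ?_ ?_ ?_⟩
  · rw [ha, hb]
    exact derivative_derivative_Delta_mul_expC d s
  · simp [h0, Delta]
  · simp [h1, coeff_one_mul, Delta, expC]

/-- **The differential-equation lemma in Theorem 2.2.** If `q ∈ X + X²ℂ[[X]]`
satisfies `(q')² − q·q'' = e^{cX}`, then `q = Δ_{c₁}·e^{−c₂X}` for some
`c₁, c₂ ∈ ℂ`; in particular `q'' − c·q' = C·q` for some constant `C`. -/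
theorem statement15 (q : PowerSeries ℂ)
    (h0 : coeff 0 q = 0) (h1 : coeff 1 q = 1)
    (c : ℂ)
    (hq : (d⁄dX ℂ q) ^ 2 - q * d⁄dX ℂ (d⁄dX ℂ q) = expC c) :
    (∃ c₁ c₂ : ℂ, q = Delta c₁ * expC (-c₂)) ∧
    ∃ K : ℂ, d⁄dX ℂ (d⁄dX ℂ q) - C c * d⁄dX ℂ q = C K * q := by
  have hwronskian : q * d⁄dX ℂ (d⁄dX ℂ (d⁄dX ℂ q) - C c * d⁄dX ℂ q) =
      d⁄dX ℂ q * (d⁄dX ℂ (d⁄dX ℂ q) - C c * d⁄dX ℂ q) := by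
    have hD := congrArg (d⁄dX ℂ) hq
    rw [derivative_expC, ← hq] at hD
    simp only [map_sub, Derivation.leibniz, Derivation.leibniz_pow, derivative_C, smul_eq_mul,
      nsmul_eq_mul] at hD ⊢
    linear_combination -hD
  obtain ⟨K, hK⟩ := exists_eq_C_mul_of_mul_derivative_eq h0 (by rw [h1]; exact one_ne_zero)
    hwronskian
  obtain ⟨d, s, hds⟩ := exists_eq_Delta_mul_expC hK h0 h1
  exact ⟨⟨d, -s, by rwa [neg_neg]⟩, K, hK⟩
end

section
/- Let f, g ∈ X + X²ℂ[[X]] with f ≠ g. Suppose there exist F, G ∈ X + X²ℂ[[X]] with F = f·F', G = g·G' and f·F = g·G (the conclusion of Proposition 2.5), and suppose moreover f' + 2(coeff_2 g)·f = g' + 2(coeff_2 f)·g (the conclusion of Proposition 2.6; note g''(0) = 2·coeff_2 g). Then there exist p, A, B ∈ ℂ such that f = Δ_p·(1 + A·Δ_{−p}) and g = Δ_p·(1 + B·Δ_{−p}). (This is Theorem 2.2: the reflection equation p_s^f(α)p_{1−s}^g(α) = p_s^g(α)p_{1−s}^f(α) with f ≠ g has no solutions other than f = Δ_p(1+AΔ_{−p}),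 g = Δ_p(1+BΔ_{−p}); the two displayed hypotheses are exactly what the paper derives from the reflection equation in Propositions 2.5 and 2.6.) -/
open PowerSeries

/-!
Differentiating `f F = g G` and substituting `F = f F'`, `G = g G'` gives
`F (f' + 1) = G (g' + 1)`; multiplying by `f` and cancelling `F` yields the Wronskian relation
`f g' - g f' = g - f`. Together with `f' + 2b f = g' + 2a g` (`a = coeff₂ f`, `b = coeff₂ g`) this
is a system whose coefficient recursion determines every coefficient of `f, g` from `a`, `b` and
`coeff₃ f = coeff₃ g`, as soon as `a ≠ b`; and `a = b` would force `f' + 1 + 2a f = 0`, impossible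
at `X⁰`. The pair `Δ_p (1 + (a - p/2) Δ_{-p})`, `Δ_p (1 + (b - p/2) Δ_{-p})` solves the same system
because `Δ_p - Δ_{-p} = p Δ_p Δ_{-p}`, and its third coefficient `p²/6` matches `coeff₃ f` for a
suitable `p`.
-/

theorem PowerSeries.coeff_add_mul_eq_sum_s16 {R : Type*} [CommSemiring R] {u : R⟦X⟧} {n : ℕ}
    (hu : ∀ k < n, coeff k u = 0) (φ : R⟦X⟧) (j : ℕ) :
    coeff (n + j) (φ * u) = ∑ i ∈ Finset.range (j + 1), coeff i φ * coeff (n + j - i) u := by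
  rw [coeff_mul, Finset.Nat.sum_antidiagonal_eq_sum_range_succ_mk]
  refine (Finset.sum_subset (Finset.range_subset_range.mpr (by omega)) fun i hi hi' => ?_).symm
  rw [Finset.mem_range] at hi hi'
  rw [hu _ (by omega), mul_zero]

theorem Derivation.wronskian_eq_sub_of_mul_eq_mul {R A : Type*} [CommSemiring R] [CommRing A]
    [IsDomain A] [Algebra R A] (D : Derivation R A A) {f g F G : A} (hF0 : F ≠ 0)
    (hF : F = f * D F) (hG : G = g * D G) (hfg : f * F = g * G) :
    f * D g - g * D f = g - f := by
  have hD : F * (D f + 1) = G * (D g + 1) := by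
    have := congrArg D hfg
    simp only [Derivation.leibniz, smul_eq_mul] at this
    linear_combination this + hF - hG
  have : F * (f * (D g + 1)) = F * (g * (D f + 1)) := by
    linear_combination (D g + 1) * hfg - g * hD
  linear_combination mul_left_cancel₀ hF0 this

namespace Delta

theorem coeff_succ (p : ℂ) (k : ℕ) : coeff (k + 1) (Delta p) = p ^ k / ((k + 1).factorial : ℂ) := by
  simp [Delta, coeff_mk]

@[simp] theorem constantCoeff_eq (p : ℂ) : constantCoeff (Delta p) = 0 := by
  simp [Delta, ← coeff_zero_eq_constantCoeff_apply]

@[simp] theorem coeff_one (p : ℂ) : coeff 1 (Delta p) = 1 := by simpa using coeff_succ p 0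

@[simp] theorem coeff_two (p : ℂ) : coeff 2 (Delta p) = p / 2 := by simpa using coeff_succ p 1

@[simp] theorem coeff_three (p : ℂ) : coeff 3 (Delta p) = p ^ 2 / 6 := by
  simpa [Nat.factorial] using coeff_succ p 2

theorem one_add_C_mul_self (p : ℂ) : 1 + C p * Delta p = rescale p (exp ℂ) := by
  ext (_ | k)
  · simp [coeff_exp]
  · rw [map_add, coeff_rescale, coeff_exp, coeff_C_mul, coeff_succ, PowerSeries.coeff_one,
      if_neg k.succ_ne_zero]
    have : ((k + 1).factorial : ℂ) ≠ 0 := mod_cast (k + 1).factorial_ne_zero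
    simp only [zero_add, one_div, map_inv₀, map_natCast]
    field_simp
    ring

theorem derivative_eq (p : ℂ) : d⁄dX ℂ (Delta p) = 1 + C p * Delta p := by
  ext (_ | k)
  · simp [coeff_derivative]
  · rw [coeff_derivative, map_add, coeff_C_mul, coeff_succ, coeff_succ, PowerSeries.coeff_one,
      if_neg k.succ_ne_zero, Nat.factorial_succ (k + 1)]
    have : ((k + 1).factorial : ℂ) ≠ 0 := mod_cast (k + 1).factorial_ne_zero
    have : (k : ℂ) + 1 + 1 ≠ 0 := mod_cast (k + 1).succ_ne_zero
    push_cast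
    field_simp
    ring

theorem sub_neg_eq_mul (p : ℂ) : Delta p - Delta (-p) = C p * (Delta p * Delta (-p)) := by
  rcases eq_or_ne p 0 with rfl | hp
  · simp
  have hinv : (1 + C p * Delta p) * (1 - C p * Delta (-p)) = 1 := by
    rw [sub_eq_add_neg, ← neg_mul, ← map_neg, one_add_C_mul_self, one_add_C_mul_self,
      exp_mul_exp_eq_exp_add, add_neg_cancel]
    simp
  have : C p * (Delta p - Delta (-p) - C p * (Delta p * Delta (-p))) = 0 := by
    linear_combination hinv
  simpa [sub_eq_zero, hp] using this

theorem coeff_mul_one_add_C_mul_neg (p c : ℂ) :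
    coeff 0 (Delta p * (1 + C c * Delta (-p))) = 0 ∧
    coeff 1 (Delta p * (1 + C c * Delta (-p))) = 1 ∧
    coeff 2 (Delta p * (1 + C c * Delta (-p))) = p / 2 + c ∧
    coeff 3 (Delta p * (1 + C c * Delta (-p))) = p ^ 2 / 6 := by
  refine ⟨?_, ?_, ?_, ?_⟩ <;>
    simp [coeff_mul, Finset.Nat.sum_antidiagonal_eq_sum_range_succ_mk, Finset.sum_range_succ] <;>
    ring

theorem derivative_mul_one_add_C_mul_neg (p c : ℂ) :
    d⁄dX ℂ (Delta p * (1 + C c * Delta (-p))) =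
      (1 + C p * Delta p) * (1 + C c * Delta (-p)) + Delta p * (C c * (1 - C p * Delta (-p))) := by
  simp only [Derivation.leibniz, smul_eq_mul, map_add, derivative_C, derivative_eq,
    Derivation.map_one_eq_zero, map_neg]
  ring

end Delta

structure ReflectionSystem (a b : ℂ) (f g : ℂ⟦X⟧) : Prop where
  coeff_zero_left : coeff 0 f = 0
  coeff_one_left : coeff 1 f = 1
  coeff_two_left : coeff 2 f = a
  coeff_zero_right : coeff 0 g = 0
  coeff_one_right : coeff 1 g = 1
  coeff_two_right : coeff 2 g = b
  wronskian : f * d⁄dX ℂ g - g * d⁄dX ℂ f = g - f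
  derivative_add : d⁄dX ℂ f + C (2 * b) * f = d⁄dX ℂ g + C (2 * a) * g

namespace ReflectionSystem

variable {a b : ℂ} {f g f₂ g₂ : ℂ⟦X⟧}

theorem coeff_three_eq (h : ReflectionSystem a b f g) : coeff 3 f = coeff 3 g := by
  have h2 := congrArg (coeff 2) h.derivative_add
  simp only [map_add, coeff_derivative, coeff_C_mul, h.coeff_two_left, h.coeff_two_right] at h2
  linear_combination h2 / 3

theorem ne_of_ne (h : ReflectionSystem a b f g) (hfg : f ≠ g) : a ≠ b := by
  rintro rfl
  have hprod : (f - g) * (d⁄dX ℂ f + 1 + C (2 * a) * f) = 0 := by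
    linear_combination h.wronskian + f * h.derivative_add
  have h0 := congrArg (coeff 0) ((mul_eq_zero.mp hprod).resolve_left (sub_ne_zero.mpr hfg))
  simp only [map_add, coeff_derivative, coeff_C_mul, h.coeff_zero_left, h.coeff_one_left] at h0
  norm_num at h0

theorem sub_derivative_add (h₁ : ReflectionSystem a b f g) (h₂ : ReflectionSystem a b f₂ g₂) :
    d⁄dX ℂ (f - f₂) - d⁄dX ℂ (g - g₂) + C (2 * b) * (f - f₂) - C (2 * a) * (g - g₂) = 0 := by
  simp only [map_sub]
  linear_combination h₁.derivative_add - h₂.derivative_add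

theorem sub_wronskian (h₁ : ReflectionSystem a b f g) (h₂ : ReflectionSystem a b f₂ g₂) :
    d⁄dX ℂ g * (f - f₂) - d⁄dX ℂ f * (g - g₂) + f₂ * d⁄dX ℂ (g - g₂) - g₂ * d⁄dX ℂ (f - f₂) +
      (f - f₂) - (g - g₂) = 0 := by
  simp only [map_sub]
  linear_combination h₁.wronskian - h₂.wronskian

theorem coeff_eq_of_forall_lt_coeff_eq (hab : a ≠ b) (h₁ : ReflectionSystem a b f g)
    (h₂ : ReflectionSystem a b f₂ g₂) {n : ℕ} (hn : 4 ≤ n)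
    (hlt : ∀ k < n, coeff k f = coeff k f₂ ∧ coeff k g = coeff k g₂) :
    coeff n f = coeff n f₂ ∧ coeff n g = coeff n g₂ := by
  obtain ⟨m, rfl⟩ : ∃ m, n = m + 1 := ⟨n - 1, by omega⟩
  set u := f - f₂ with hu_def
  set v := g - g₂ with hv_def
  have hu : ∀ k < m + 1, coeff k u = 0 := fun k hk => by simp [u, (hlt k hk).1]
  have hv : ∀ k < m + 1, coeff k v = 0 := fun k hk => by simp [v, (hlt k hk).2]
  have hu' : ∀ k < m, coeff k (d⁄dX ℂ u) = 0 := fun k hk => by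
    rw [coeff_derivative, hu _ (by omega), zero_mul]
  have hv' : ∀ k < m, coeff k (d⁄dX ℂ v) = 0 := fun k hk => by
    rw [coeff_derivative, hv _ (by omega), zero_mul]
  have hL1 := sub_derivative_add h₁ h₂
  have hL2 := sub_wronskian h₁ h₂
  rw [← hu_def, ← hv_def] at hL1 hL2
  have e1 := congrArg (coeff m) hL1
  have e2 := congrArg (coeff (m + 1)) hL1
  have e3 := congrArg (coeff (m + 1 + 1)) hL2
  simp only [map_add, map_sub, coeff_C_mul, coeff_derivative, map_zero, hu m (by omega),
    hv m (by omega)] at e1 e2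
  simp only [map_add, map_sub, map_zero] at e3
  rw [coeff_add_mul_eq_sum_s16 hu, coeff_add_mul_eq_sum_s16 hv, add_assoc m 1 1,
    coeff_add_mul_eq_sum_s16 hu', coeff_add_mul_eq_sum_s16 hv'] at e3
  simp only [Nat.reduceAdd, coeff_derivative, Finset.sum_range_succ, Finset.range_one,
    Finset.sum_singleton, zero_add, h₁.coeff_one_right, CharP.cast_eq_zero, mul_one, tsub_zero,
    one_mul, h₁.coeff_two_right, Nat.cast_one, Nat.add_one_sub_one, h₁.coeff_one_left,
    h₁.coeff_two_left, h₂.coeff_zero_left, Nat.cast_add, Nat.cast_ofNat, zero_mul,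
    h₂.coeff_one_left, h₂.coeff_two_left, add_tsub_cancel_right, h₂.coeff_zero_right,
    h₂.coeff_one_right, h₂.coeff_two_right] at e3
  have hw : coeff (m + 1) u = coeff (m + 1) v := by
    have : (coeff (m + 1) u - coeff (m + 1) v) * ((m : ℂ) + 1) = 0 := by linear_combination e1
    exact sub_eq_zero.mp ((mul_eq_zero.mp this).resolve_right (mod_cast m.succ_ne_zero))
  simp only [show m + 1 + 1 = m + 2 from rfl, hw] at e2 e3
  push_cast at e2
  -- The factor `(n - 3) n` (with `n = m + 1`) vanishes only at `n = 3`: `coeff₃` is the one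
  -- coefficient the recursion leaves free.
  have key : (a - b) * coeff (m + 1) v * (((m : ℂ) - 2) * ((m : ℂ) + 1)) = 0 := by
    linear_combination ((m : ℂ) + 2) * e3 + (m : ℂ) * e2
  have hm2 : (m : ℂ) - 2 ≠ 0 := sub_ne_zero.mpr (mod_cast (show m ≠ 2 by omega))
  have hm1 : (m : ℂ) + 1 ≠ 0 := mod_cast m.succ_ne_zero
  have hv0 : coeff (m + 1) v = 0 := by simpa [sub_eq_zero, hab, hm2, hm1] using key
  exact ⟨sub_eq_zero.mp (hw.trans hv0), sub_eq_zero.mp hv0⟩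

theorem eq_of_coeff_three_eq (hab : a ≠ b) (h₁ : ReflectionSystem a b f g)
    (h₂ : ReflectionSystem a b f₂ g₂) (h3 : coeff 3 f = coeff 3 f₂) : f = f₂ ∧ g = g₂ := by
  have hcoeff : ∀ n, coeff n f = coeff n f₂ ∧ coeff n g = coeff n g₂ := by
    intro n
    induction n using Nat.strong_induction_on with
    | _ n ih =>
      rcases lt_or_ge n 4 with hn | hn
      · interval_cases n
        · exact ⟨h₁.coeff_zero_left.trans h₂.coeff_zero_left.symm,
            h₁.coeff_zero_right.trans h₂.coeff_zero_right.symm⟩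
        · exact ⟨h₁.coeff_one_left.trans h₂.coeff_one_left.symm,
            h₁.coeff_one_right.trans h₂.coeff_one_right.symm⟩
        · exact ⟨h₁.coeff_two_left.trans h₂.coeff_two_left.symm,
            h₁.coeff_two_right.trans h₂.coeff_two_right.symm⟩
        · exact ⟨h3, h₁.coeff_three_eq.symm.trans (h3.trans h₂.coeff_three_eq)⟩
      · exact coeff_eq_of_forall_lt_coeff_eq hab h₁ h₂ hn ih
  exact ⟨ext fun n => (hcoeff n).1, ext fun n => (hcoeff n).2⟩

end ReflectionSystem

theorem reflectionSystem_Delta (a b p : ℂ) :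
    ReflectionSystem a b (Delta p * (1 + C (a - p / 2) * Delta (-p)))
      (Delta p * (1 + C (b - p / 2) * Delta (-p))) := by
  obtain ⟨fa0, fa1, fa2, -⟩ := Delta.coeff_mul_one_add_C_mul_neg p (a - p / 2)
  obtain ⟨fb0, fb1, fb2, -⟩ := Delta.coeff_mul_one_add_C_mul_neg p (b - p / 2)
  have hC : ∀ c, C (2 * c) = C p + 2 * C (c - p / 2) := fun c => by
    rw [← map_ofNat C 2, ← map_mul, ← map_add]; congr 1; ring
  refine ⟨fa0, fa1, by rw [fa2]; ring, fb0, fb1, by rw [fb2]; ring, ?_, ?_⟩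
  · rw [Delta.derivative_mul_one_add_C_mul_neg, Delta.derivative_mul_one_add_C_mul_neg]
    linear_combination (C (b - p / 2) - C (a - p / 2)) * Delta p * Delta.sub_neg_eq_mul p
  · rw [Delta.derivative_mul_one_add_C_mul_neg, Delta.derivative_mul_one_add_C_mul_neg, hC, hC]
    linear_combination (C (b - p / 2) - C (a - p / 2)) * Delta.sub_neg_eq_mul p

theorem statement16_general (f g F G : PowerSeries ℂ)
    (hf0 : coeff 0 f = 0) (hf1 : coeff 1 f = 1)
    (hg0 : coeff 0 g = 0) (hg1 : coeff 1 g = 1)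
    (hne : f ≠ g)
    (hF1 : coeff 1 F = 1)
    (hF : F = f * d⁄dX ℂ F) (hG : G = g * d⁄dX ℂ G)
    (hfg : f * F = g * G)
    (hder : d⁄dX ℂ f + C (2 * coeff 2 g) * f = d⁄dX ℂ g + C (2 * coeff 2 f) * g) :
    ∃ p A B : ℂ, f = Delta p * (1 + C A * Delta (-p)) ∧
      g = Delta p * (1 + C B * Delta (-p)) := by
  have hF0 : F ≠ 0 := by rintro rfl; simp at hF1
  have hS : ReflectionSystem (coeff 2 f) (coeff 2 g) f g :=
    ⟨hf0, hf1, rfl, hg0, hg1, rfl,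
      (d⁄dX ℂ).wronskian_eq_sub_of_mul_eq_mul hF0 hF hG hfg, hder⟩
  obtain ⟨p, hp⟩ := IsAlgClosed.exists_pow_nat_eq (6 * coeff 3 f) two_pos
  refine ⟨p, _, _, hS.eq_of_coeff_three_eq (hS.ne_of_ne hne) (reflectionSystem_Delta _ _ p) ?_⟩
  rw [(Delta.coeff_mul_one_add_C_mul_neg p _).2.2.2, hp]
  ring

/-- **Theorem 2.2.** Let `f ≠ g` be normalized series satisfying the conclusions of
Propositions 2.5 and 2.6 (derived from the reflection equation
`p_s^f·p_{1−s}^g = p_s^g·p_{1−s}^f`): there are normalized `F, G` with `F = f·F'`,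
`G = g·G'` and `f·F = g·G`, and moreover
`f' + g''(0)·f = g' + f''(0)·g` (note `g''(0) = 2·coeff₂ g`).  Then
`f = Δ_p·(1 + A·Δ_{−p})` and `g = Δ_p·(1 + B·Δ_{−p})` for some `p, A, B ∈ ℂ`. -/
theorem statement16 (f g F G : PowerSeries ℂ)
    (hf0 : coeff 0 f = 0) (hf1 : coeff 1 f = 1)
    (hg0 : coeff 0 g = 0) (hg1 : coeff 1 g = 1)
    (hne : f ≠ g)
    (hF0 : coeff 0 F = 0) (hF1 : coeff 1 F = 1)
    (hG0 : coeff 0 G = 0) (hG1 : coeff 1 G = 1)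
    (hF : F = f * d⁄dX ℂ F) (hG : G = g * d⁄dX ℂ G)
    (hfg : f * F = g * G)
    (hder : d⁄dX ℂ f + C (2 * coeff 2 g) * f = d⁄dX ℂ g + C (2 * coeff 2 f) * g) :
    ∃ p A B : ℂ, f = Delta p * (1 + C A * Delta (-p)) ∧
      g = Delta p * (1 + C B * Delta (-p)) :=
  statement16_general f g F G hf0 hf1 hg0 hg1 hne hF1 hF hG hfg hder
end
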